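/- arXiv:2410.12962 — 6 statements merged into one kernel-verified Lean document; each statement's English description precedes it below -/
import Mathlib

section
/- Let f : [0,1] → ℝ be a continuous function whose graph G = {(x, f(x)) : x ∈ [0,1]} is a self-similar set. Then f(x) = f(0) + (f(1) − f(0))·x for all x ∈ [0,1]. -/
/-- The rotation of ℝ² by angle θ, given by the matrix ((cos θ, sin θ), (−sin θ, cos θ)). -/
noncomputable def rot (θ : ℝ) (v : ℝ × ℝ) : ℝ × ℝ :=
  (v.1 * Real.cos θ + v.2 * Real.sin θ, -v.1 * Real.sin θ + v.2 * Real.cos θ)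

/-- A (contracting) similitude of ℝ²: a map `S v = r • ρ_θ v + b` with `r ∈ (0,1)`. -/
def IsSimilitude (S : ℝ × ℝ → ℝ × ℝ) : Prop :=
  ∃ (r θ : ℝ) (b : ℝ × ℝ), r ∈ Set.Ioo (0 : ℝ) 1 ∧ ∀ v, S v = r • rot θ v + b

/-- A compact set `K ⊆ ℝ²` is self-similar if it is the union of its images under
finitely many (at least one) contracting similitudes. -/
def IsSelfSimilar (K : Set (ℝ × ℝ)) : Prop :=
  IsCompact K ∧ ∃ (k : ℕ) (S : Fin k → ℝ × ℝ → ℝ × ℝ),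
    0 < k ∧ (∀ i, IsSimilitude (S i)) ∧ K = ⋃ i, S i '' K

/-!
The graph is covered by arbitrarily small similar copies of itself. If some self-similitude of
the graph rotates (`sin θ ≠ 0`), it induces the injective, hence monotone, continuous map
`x ↦ x cos θ + f x sin θ`; otherwise every copy is an affine image `x ↦ ±ρ x + c` of the graph,
and chaining the copies of one scale shows that `f` is Lipschitz. Either way `f` has locally
bounded variation, so it is differentiable at some `x₀`. The copies through `(x₀, f x₀)` are flat
to first order, while a similitude of ratio `ρ` multiplies the signed area of the triangle
`(0, f 0), (1, f 1), (y, f y)` by `ρ ^ 2`; hence that area vanishes.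
-/

open Set MeasureTheory

def IsSimilitudeWith (r : ℝ) (S : ℝ × ℝ → ℝ × ℝ) : Prop :=
  ∃ (θ : ℝ) (b : ℝ × ℝ), ∀ v, S v = r • rot θ v + b

def cross (v w : ℝ × ℝ) : ℝ := v.1 * w.2 - v.2 * w.1

lemma rot_rot (θ₁ θ₂ : ℝ) (v : ℝ × ℝ) : rot θ₁ (rot θ₂ v) = rot (θ₁ + θ₂) v := by
  simp only [rot, Real.cos_add, Real.sin_add, Prod.mk.injEq]
  constructor <;> ring

lemma rot_zero (v : ℝ × ℝ) : rot 0 v = v := by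
  simp [rot]

lemma rot_injective (θ : ℝ) : Function.Injective (rot θ) := fun v w h => by
  simpa [rot_rot, rot_zero] using congrArg (rot (-θ)) h

lemma rot_add (θ : ℝ) (v w : ℝ × ℝ) : rot θ (v + w) = rot θ v + rot θ w := by
  simp only [rot, Prod.fst_add, Prod.snd_add, Prod.mk_add_mk, Prod.mk.injEq]
  constructor <;> ring

lemma rot_smul (θ c : ℝ) (v : ℝ × ℝ) : rot θ (c • v) = c • rot θ v := by
  simp only [rot, Prod.smul_fst, Prod.smul_snd, Prod.smul_mk, smul_eq_mul, Prod.mk.injEq]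
  constructor <;> ring

lemma cross_rot (θ : ℝ) (v w : ℝ × ℝ) : cross (rot θ v) (rot θ w) = cross v w := by
  simp only [cross, rot]
  linear_combination (v.1 * w.2 - v.2 * w.1) * Real.sin_sq_add_cos_sq θ

namespace IsSimilitudeWith

lemma id : IsSimilitudeWith 1 id :=
  ⟨0, 0, fun v => by simp [rot_zero]⟩

lemma comp {r₁ r₂ : ℝ} {S₁ S₂ : ℝ × ℝ → ℝ × ℝ} (h₁ : IsSimilitudeWith r₁ S₁)
    (h₂ : IsSimilitudeWith r₂ S₂) : IsSimilitudeWith (r₁ * r₂) (S₁ ∘ S₂) := by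
  obtain ⟨θ₁, b₁, h₁⟩ := h₁
  obtain ⟨θ₂, b₂, h₂⟩ := h₂
  refine ⟨θ₁ + θ₂, r₁ • rot θ₁ b₂ + b₁, fun v => ?_⟩
  simp only [Function.comp_apply, h₁, h₂, rot_add, rot_smul, rot_rot, smul_add, mul_smul]
  abel

lemma injective {r : ℝ} {S : ℝ × ℝ → ℝ × ℝ} (hS : IsSimilitudeWith r S) (hr : r ≠ 0) :
    Function.Injective S := by
  obtain ⟨θ, b, hS⟩ := hS
  intro v w h
  rw [hS, hS, add_left_inj] at h
  exact rot_injective θ (smul_right_injective _ hr h)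

lemma cross_sub {r : ℝ} {S : ℝ × ℝ → ℝ × ℝ} (hS : IsSimilitudeWith r S) (p q w : ℝ × ℝ) :
    cross (S q - S p) (S w - S p) = r ^ 2 * cross (q - p) (w - p) := by
  obtain ⟨θ, b, hS⟩ := hS
  have hsub : ∀ v, S v - S p = r • rot θ (v - p) := fun v => by
    rw [hS, hS, sub_eq_add_neg v p, rot_add, ← neg_one_smul ℝ p, rot_smul]
    module
  rw [hsub, hsub, ← cross_rot θ (q - p)]
  simp only [cross, Prod.smul_fst, Prod.smul_snd, smul_eq_mul]
  ring

lemma abs_fst_sub_le {r : ℝ} {S : ℝ × ℝ → ℝ × ℝ} (hS : IsSimilitudeWith r S) (hr : 0 ≤ r)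
    (v w : ℝ × ℝ) : |(S v).1 - (S w).1| ≤ r * (|v.1 - w.1| + |v.2 - w.2|) := by
  obtain ⟨θ, b, hS⟩ := hS
  have hfst : (S v).1 - (S w).1 = r * ((v.1 - w.1) * Real.cos θ + (v.2 - w.2) * Real.sin θ) := by
    simp only [hS, rot, Prod.fst_add, Prod.smul_fst, smul_eq_mul]
    ring
  rw [hfst, abs_mul, abs_of_nonneg hr]
  gcongr
  calc |(v.1 - w.1) * Real.cos θ + (v.2 - w.2) * Real.sin θ|
      ≤ |v.1 - w.1| * |Real.cos θ| + |v.2 - w.2| * |Real.sin θ| := by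
        rw [← abs_mul, ← abs_mul]; exact abs_add_le _ _
    _ ≤ |v.1 - w.1| * 1 + |v.2 - w.2| * 1 := by
        gcongr
        exacts [Real.abs_cos_le_one θ, Real.abs_sin_le_one θ]
    _ = |v.1 - w.1| + |v.2 - w.2| := by ring

end IsSimilitudeWith

def IsSimilitudeCover (K : Set (ℝ × ℝ)) (δ : ℝ) (T : Set (ℝ × ℝ → ℝ × ℝ)) : Prop :=
  T.Finite ∧ (∀ U ∈ T, MapsTo U K K ∧ ∃ ρ, 0 < ρ ∧ ρ ≤ δ ∧ IsSimilitudeWith ρ U) ∧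
    K ⊆ ⋃ U ∈ T, U '' K

lemma exists_isSimilitudeCover_pow {K : Set (ℝ × ℝ)} {ι : Type*} [Finite ι]
    {S : ι → ℝ × ℝ → ℝ × ℝ} {r : ℝ}
    (hS : ∀ i, ∃ ρ, 0 < ρ ∧ ρ ≤ r ∧ IsSimilitudeWith ρ (S i)) (hK : K = ⋃ i, S i '' K) :
    ∀ n : ℕ, ∃ T, IsSimilitudeCover K (r ^ n) T := by
  have hmaps : ∀ i, MapsTo (S i) K K := fun i x hx => by
    rw [hK]; exact mem_iUnion.2 ⟨i, mem_image_of_mem _ hx⟩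
  intro n
  induction n with
  | zero =>
    refine ⟨{id}, finite_singleton _, ?_, fun z hz => ?_⟩
    · rintro U rfl
      exact ⟨mapsTo_id K, 1, one_pos, by rw [pow_zero], IsSimilitudeWith.id⟩
    · simpa using hz
  | succ n ih =>
    obtain ⟨T, hfin, hT, hcov⟩ := ih
    refine ⟨image2 (· ∘ ·) (range S) T, (finite_range S).image2 _ hfin, ?_, fun z hz => ?_⟩
    · rintro _ ⟨_, ⟨i, rfl⟩, U, hU, rfl⟩
      obtain ⟨hUK, ρ, hρ, hρn, hUρ⟩ := hT U hU
      obtain ⟨ρi, hρi, hρir, hSi⟩ := hS i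
      refine ⟨(hmaps i).comp hUK, ρi * ρ, mul_pos hρi hρ, ?_, hSi.comp hUρ⟩
      rw [pow_succ']
      exact mul_le_mul hρir hρn hρ.le (hρi.le.trans hρir)
    · rw [hK] at hz
      obtain ⟨i, w, hw, rfl⟩ := mem_iUnion.1 hz
      obtain ⟨U, hU, x, hx, rfl⟩ := mem_iUnion₂.1 (hcov hw)
      exact mem_iUnion₂.2 ⟨S i ∘ U, mem_image2_of_mem ⟨i, rfl⟩ hU, x, hx, rfl⟩

lemma IsSelfSimilar.exists_isSimilitudeCover {K : Set (ℝ × ℝ)} (hK : IsSelfSimilar K) {δ : ℝ}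
    (hδ : 0 < δ) : ∃ T, IsSimilitudeCover K δ T := by
  obtain ⟨-, k, S, hk, hsim, hKS⟩ := hK
  choose ρ θ b hρ hSρ using hsim
  have : Nonempty (Fin k) := ⟨⟨0, hk⟩⟩
  set r := Finset.univ.sup' Finset.univ_nonempty ρ
  have hr : r < 1 := (Finset.sup'_lt_iff _).2 fun i _ => (hρ i).2
  obtain ⟨n, hn⟩ := exists_pow_lt_of_lt_one hδ hr
  obtain ⟨T, hfin, hT, hcov⟩ := exists_isSimilitudeCover_pow (r := r)
    (fun i => ⟨ρ i, (hρ i).1, Finset.le_sup' ρ (Finset.mem_univ i), θ i, b i, hSρ i⟩) hKS n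
  exact ⟨T, hfin, fun U hU => (hT U hU).imp_right fun ⟨ρ', h0, hle, h⟩ =>
    ⟨ρ', h0, hle.trans hn.le, h⟩, hcov⟩

lemma LocallyBoundedVariationOn.exists_differentiableAt {g : ℝ → ℝ} {a b : ℝ}
    (hg : LocallyBoundedVariationOn g (Icc a b)) (hab : a < b) :
    ∃ x ∈ Ioo a b, DifferentiableAt ℝ g x := by
  have hae : ∀ᵐ x ∂volume.restrict (Ioo a b), x ∈ Ioo a b ∧ DifferentiableAt ℝ g x := by
    rw [ae_restrict_iff' measurableSet_Ioo]
    filter_upwards [hg.ae_differentiableWithinAt_of_mem] with x hx hxI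
    exact ⟨hxI, (hx (Ioo_subset_Icc_self hxI)).differentiableAt (Icc_mem_nhds hxI.1 hxI.2)⟩
  have : (ae (volume.restrict (Ioo a b))).NeBot := ae_restrict_neBot.2 (by simp [hab])
  exact hae.exists

lemma ContinuousOn.exists_differentiableAt_of_injOn {g : ℝ → ℝ} {a b : ℝ}
    (hg : ContinuousOn g (Icc a b)) (hinj : InjOn g (Icc a b)) (hab : a < b) :
    ∃ x ∈ Ioo a b, DifferentiableAt ℝ g x := by
  rcases hg.strictMonoOn_of_injOn_Icc' hab.le hinj with hmono | hanti
  · exact hmono.monotoneOn.locallyBoundedVariationOn.exists_differentiableAt hab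
  · obtain ⟨x, hx, hdiff⟩ :=
      hanti.antitoneOn.neg.locallyBoundedVariationOn.exists_differentiableAt hab
    exact ⟨x, hx, differentiableAt_neg_iff.1 hdiff⟩

section Chain

variable {ι : Type*} {f : ℝ → ℝ} {Ω δ : ℝ} {a b : ι → ℝ}

lemma exists_mem_Icc_of_Ioc_subset {F : Finset ι} {t y : ℝ} (hty : t < y)
    (hcov : Ioc t y ⊆ ⋃ i ∈ F, Icc (a i) (b i)) : ∃ i ∈ F, a i ≤ t ∧ t < b i := by
  classical
  have hcov' : Ioc t y ⊆ ⋃ i ∈ F.filter (fun i => t < b i), Icc (a i) (b i) := fun z hz => by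
    obtain ⟨i, hi, hzi⟩ := mem_iUnion₂.1 (hcov hz)
    exact mem_iUnion₂.2 ⟨i, Finset.mem_filter.2 ⟨hi, hz.1.trans_le hzi.2⟩, hzi⟩
  have hclosed := isClosed_biUnion_finset (s := F.filter (fun i => t < b i))
    (fun i _ => isClosed_Icc (a := a i) (b := b i))
  have ht : t ∈ closure (Ioc t y) := by
    rw [closure_Ioc hty.ne]
    exact left_mem_Icc.2 hty.le
  obtain ⟨i, hi, hti⟩ := mem_iUnion₂.1 (hclosed.closure_subset_iff.2 hcov' ht)
  exact ⟨i, (Finset.mem_filter.1 hi).1, hti.1, (Finset.mem_filter.1 hi).2⟩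

/-- Greedy chain: from `t`, jump to the right end of the interval through `t` that reaches
furthest. By the invariant `hstart`, the `k`-th and `(k+2)`-th intervals of the chain are
disjoint, so their total length is at most twice the distance covered plus one width. -/
lemma abs_sub_le_of_chain (hΩ : 0 ≤ Ω) (hδ : 0 ≤ δ) (F : Finset ι)
    (hwidth : ∀ i ∈ F, b i - a i ≤ δ)
    (hosc : ∀ i ∈ F, ∀ u ∈ Icc (a i) (b i), ∀ v ∈ Icc (a i) (b i), |f u - f v| ≤ Ω * (b i - a i))
    {π t y : ℝ} (hπt : π ≤ t) (hty : t ≤ y) (hcov : Ioc t y ⊆ ⋃ i ∈ F, Icc (a i) (b i))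
    (hstart : ∀ i ∈ F, t < b i → π < a i) :
    |f y - f t| ≤ Ω * (2 * (y - t) + (t - π) + δ) := by
  classical
  induction F using Finset.strongInduction generalizing π t with
  | H F ih =>
  rcases hty.eq_or_lt with rfl | hty
  · simp only [sub_self, abs_zero]
    exact mul_nonneg hΩ (by linarith)
  obtain ⟨j, hjF, hjt, htj⟩ := exists_mem_Icc_of_Ioc_subset hty hcov
  obtain ⟨i, hi, himax⟩ := Finset.exists_max_image (F.filter fun i => a i ≤ t ∧ t < b i) b
    ⟨j, Finset.mem_filter.2 ⟨hjF, hjt, htj⟩⟩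
  obtain ⟨hiF, hit, hti⟩ := Finset.mem_filter.1 hi
  have hπi := hstart i hiF hti
  rcases le_or_gt y (b i) with hyi | hiy
  · calc |f y - f t| ≤ Ω * (b i - a i) :=
          hosc i hiF y ⟨hit.trans hty.le, hyi⟩ t ⟨hit, hti.le⟩
      _ ≤ Ω * δ := mul_le_mul_of_nonneg_left (hwidth i hiF) hΩ
      _ ≤ Ω * (2 * (y - t) + (t - π) + δ) := mul_le_mul_of_nonneg_left (by linarith) hΩ
  have hrest : |f y - f (b i)| ≤ Ω * (2 * (y - b i) + (b i - t) + δ) := by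
    refine ih (F.erase i) (Finset.erase_ssubset hiF)
      (fun j hj => hwidth j (Finset.mem_of_mem_erase hj))
      (fun j hj => hosc j (Finset.mem_of_mem_erase hj)) hti.le hiy.le
      (fun z hz => ?_) (fun j hj hij => ?_)
    · obtain ⟨j, hj, hzj⟩ := mem_iUnion₂.1 (hcov ⟨hti.trans hz.1, hz.2⟩)
      refine mem_iUnion₂.2 ⟨j, Finset.mem_erase.2 ⟨?_, hj⟩, hzj⟩
      rintro rfl
      exact hz.1.not_ge hzj.2
    · by_contra! hjt
      have := himax j (Finset.mem_filter.2 ⟨Finset.mem_of_mem_erase hj, hjt, hti.trans hij⟩)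
      exact hij.not_ge this
  calc |f y - f t| ≤ |f y - f (b i)| + |f (b i) - f t| := abs_sub_le _ _ _
    _ ≤ Ω * (2 * (y - b i) + (b i - t) + δ) + Ω * (b i - π) := by
        gcongr
        exact (hosc i hiF _ ⟨hit.trans hti.le, le_rfl⟩ t ⟨hit, hti.le⟩).trans
          (mul_le_mul_of_nonneg_left (by linarith) hΩ)
    _ = Ω * (2 * (y - t) + (t - π) + δ) := by ring

lemma lipschitzOnWith_of_forall_cover (hΩ : 0 ≤ Ω) {s : Set ℝ} (hs : s.OrdConnected)
    (hcov : ∀ δ > 0, ∃ F : Finset ι, (∀ i ∈ F, b i - a i ≤ δ) ∧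
      (∀ i ∈ F, ∀ u ∈ Icc (a i) (b i), ∀ v ∈ Icc (a i) (b i), |f u - f v| ≤ Ω * (b i - a i)) ∧
      s ⊆ ⋃ i ∈ F, Icc (a i) (b i)) :
    LipschitzOnWith (2 * Ω).toNNReal f s := by
  have key : ∀ x ∈ s, ∀ y ∈ s, x ≤ y → |f y - f x| ≤ 2 * Ω * (y - x) := by
    intro x hx y hy hxy
    refine le_of_forall_pos_le_add fun ε hε => ?_
    set δ := ε / (2 * Ω + 1)
    have hδ : 0 < δ := by positivity
    have hδε : 2 * Ω * δ + δ = ε := by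
      simp only [δ]
      field_simp
    obtain ⟨F, hwidth, hosc, hF⟩ := hcov δ hδ
    have := abs_sub_le_of_chain hΩ hδ.le F hwidth hosc (π := x - δ) (by linarith) hxy
      ((Ioc_subset_Icc_self.trans (hs.out hx hy)).trans hF)
      (fun i hi hxi => by linarith [hwidth i hi])
    linarith
  refine LipschitzOnWith.of_dist_le_mul fun x hx y hy => ?_
  rw [Real.dist_eq, Real.dist_eq, Real.coe_toNNReal _ (by positivity)]
  rcases le_total x y with hxy | hyx
  · rw [abs_sub_comm (f x), abs_sub_comm x, abs_of_nonneg (sub_nonneg.2 hxy)]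
    exact key x hx y hy hxy
  · rw [abs_of_nonneg (sub_nonneg.2 hyx)]
    exact key y hy x hx hyx

end Chain

lemma image_affine_Icc_zero_one (s c : ℝ) : (fun x => s * x + c) '' Icc 0 1 = uIcc c (s + c) := by
  have : (fun x => s * x + c) = (· + c) ∘ (s * ·) := rfl
  rw [this, image_comp, ← uIcc_of_le zero_le_one, image_const_mul_uIcc, image_add_const_uIcc]
  simp

lemma Set.MapsTo.apply_mem_graphOn {α β : Type*} {f : α → β} {s : Set α}
    {U : α × β → α × β} (hU : MapsTo U (s.graphOn f) (s.graphOn f)) {x : α} (hx : x ∈ s) :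
    (U (x, f x)).1 ∈ s ∧ U (x, f x) = ((U (x, f x)).1, f (U (x, f x)).1) := by
  obtain ⟨hmem, heq⟩ := mem_graphOn.1 (hU ⟨x, hx, rfl⟩)
  exact ⟨hmem, Prod.ext rfl heq.symm⟩

section Graph

variable {f : ℝ → ℝ}

lemma exists_differentiableAt_of_mapsTo_rot (hf : ContinuousOn f (Icc 0 1)) {ρ θ : ℝ}
    {c : ℝ × ℝ} (hρ : 0 < ρ) (hθ : Real.sin θ ≠ 0)
    (hU : MapsTo (fun v => ρ • rot θ v + c) ((Icc 0 1).graphOn f) ((Icc 0 1).graphOn f)) :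
    ∃ x ∈ Ioo 0 1, DifferentiableAt ℝ f x := by
  set h : ℝ → ℝ := fun x => x * Real.cos θ + f x * Real.sin θ
  have hfst : ∀ x, (ρ • rot θ (x, f x) + c).1 = ρ * h x + c.1 := fun x => by
    simp [h, rot]
  have hinj : InjOn h (Icc 0 1) := fun x hx y hy hxy => by
    have hUxy : ρ • rot θ (x, f x) + c = ρ • rot θ (y, f y) + c := by
      rw [(hU.apply_mem_graphOn hx).2, (hU.apply_mem_graphOn hy).2, hfst, hfst, hxy]
    exact congrArg Prod.fst (IsSimilitudeWith.injective ⟨θ, c, fun _ => rfl⟩ hρ.ne' hUxy)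
  have hcont : ContinuousOn h (Icc 0 1) :=
    (continuousOn_id.mul continuousOn_const).add (hf.mul continuousOn_const)
  obtain ⟨x, hx, hdiff⟩ := hcont.exists_differentiableAt_of_injOn hinj zero_lt_one
  have hf_eq : f = fun x => (h x - x * Real.cos θ) / Real.sin θ := by
    funext x
    field_simp
    ring
  rw [hf_eq]
  exact ⟨x, hx, (hdiff.sub (differentiableAt_id.mul_const _)).div_const _⟩

lemma exists_affine_of_mapsTo_of_sin_eq_zero {U : ℝ × ℝ → ℝ × ℝ} {ρ θ : ℝ} {c : ℝ × ℝ}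
    (hUeq : ∀ v, U v = ρ • rot θ v + c) (hθ : Real.sin θ = 0) (hρ : 0 ≤ ρ)
    (hU : MapsTo U ((Icc 0 1).graphOn f) ((Icc 0 1).graphOn f)) :
    ∃ s, |s| = ρ ∧ ∀ x ∈ Icc (0 : ℝ) 1,
      (U (x, f x)).1 = s * x + c.1 ∧ f (s * x + c.1) = s * f x + c.2 := by
  have hcos : |Real.cos θ| = 1 := by
    refine (pow_eq_one_iff_of_nonneg (abs_nonneg _) two_ne_zero).1 ?_
    linear_combination (sq_abs (Real.cos θ)) + Real.sin_sq_add_cos_sq θ - Real.sin θ * hθ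
  refine ⟨ρ * Real.cos θ, by rw [abs_mul, hcos, abs_of_nonneg hρ, mul_one], fun x hx => ?_⟩
  have hUx : U (x, f x) = (ρ * Real.cos θ * x + c.1, ρ * Real.cos θ * f x + c.2) := by
    ext <;> simp [hUeq, rot, hθ] <;> ring
  have heq := (hU.apply_mem_graphOn hx).2
  rw [hUx, Prod.mk.injEq] at heq
  exact ⟨by rw [hUx], heq.2.symm⟩

lemma affine_copy_of_sin_eq_zero {U : ℝ × ℝ → ℝ × ℝ} {ρ θ Ω : ℝ} {c : ℝ × ℝ}
    (hΩ : ∀ x ∈ Icc (0 : ℝ) 1, ∀ y ∈ Icc (0 : ℝ) 1, |f x - f y| ≤ Ω)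
    (hUeq : ∀ v, U v = ρ • rot θ v + c) (hθ : Real.sin θ = 0) (hρ : 0 ≤ ρ)
    (hU : MapsTo U ((Icc 0 1).graphOn f) ((Icc 0 1).graphOn f)) :
    let φ := fun x => (U (x, f x)).1
    |φ 1 - φ 0| = ρ ∧ (∀ u ∈ uIcc (φ 0) (φ 1), ∀ v ∈ uIcc (φ 0) (φ 1), |f u - f v| ≤ Ω * ρ) ∧
      MapsTo φ (Icc 0 1) (uIcc (φ 0) (φ 1)) := by
  intro φ
  obtain ⟨s, hs, hφ⟩ := exists_affine_of_mapsTo_of_sin_eq_zero hUeq hθ hρ hU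
  have hφ0 : φ 0 = c.1 := by simpa using (hφ 0 (left_mem_Icc.2 zero_le_one)).1
  have hφ1 : φ 1 = s + c.1 := by simpa using (hφ 1 (right_mem_Icc.2 zero_le_one)).1
  have himage : uIcc (φ 0) (φ 1) = (fun x => s * x + c.1) '' Icc 0 1 := by
    rw [image_affine_Icc_zero_one, hφ0, hφ1]
  refine ⟨by rw [hφ0, hφ1, add_sub_cancel_right, hs], ?_,
    fun x hx => himage ▸ ⟨x, hx, (hφ x hx).1.symm⟩⟩
  rw [himage, ← hs]
  rintro _ ⟨x, hx, rfl⟩ _ ⟨y, hy, rfl⟩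
  rw [(hφ x hx).2, (hφ y hy).2, add_sub_add_right_eq_sub, ← mul_sub, abs_mul, mul_comm Ω]
  exact mul_le_mul_of_nonneg_left (hΩ x hx y hy) (abs_nonneg s)

lemma lipschitzOnWith_of_forall_sin_eq_zero {Ω : ℝ}
    (hΩ : ∀ x ∈ Icc (0 : ℝ) 1, ∀ y ∈ Icc (0 : ℝ) 1, |f x - f y| ≤ Ω)
    (hcov : ∀ δ > 0, ∃ T, IsSimilitudeCover ((Icc 0 1).graphOn f) δ T)
    (hsin : ∀ (ρ θ : ℝ) (c : ℝ × ℝ), 0 < ρ →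
      MapsTo (fun v => ρ • rot θ v + c) ((Icc 0 1).graphOn f) ((Icc 0 1).graphOn f) →
      Real.sin θ = 0) :
    LipschitzOnWith (2 * Ω).toNNReal f (Icc 0 1) := by
  have h0 : (0 : ℝ) ∈ Icc (0 : ℝ) 1 := left_mem_Icc.2 zero_le_one
  have hΩ0 : 0 ≤ Ω := by simpa using hΩ 0 h0 0 h0
  set φ : (ℝ × ℝ → ℝ × ℝ) → ℝ → ℝ := fun U x => (U (x, f x)).1
  refine lipschitzOnWith_of_forall_cover (a := fun U => min (φ U 0) (φ U 1))
    (b := fun U => max (φ U 0) (φ U 1)) hΩ0 ordConnected_Icc fun δ hδ => ?_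
  obtain ⟨T, hfin, hT, hcovT⟩ := hcov δ hδ
  have hcopy : ∀ U ∈ T, ∃ ρ ≤ δ, |φ U 1 - φ U 0| = ρ ∧
      (∀ u ∈ uIcc (φ U 0) (φ U 1), ∀ v ∈ uIcc (φ U 0) (φ U 1), |f u - f v| ≤ Ω * ρ) ∧
      MapsTo (φ U) (Icc 0 1) (uIcc (φ U 0) (φ U 1)) := fun U hU => by
    obtain ⟨hUG, ρ, hρ, hρδ, θ, c, hUeq⟩ := hT U hU
    have hθ : Real.sin θ = 0 := hsin ρ θ c hρ (funext hUeq ▸ hUG)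
    exact ⟨ρ, hρδ, affine_copy_of_sin_eq_zero hΩ hUeq hθ hρ.le hUG⟩
  refine ⟨hfin.toFinset, fun U hU => ?_, fun U hU => ?_, fun z hz => ?_⟩
  · obtain ⟨ρ, hρδ, hwidth, -⟩ := hcopy U (hfin.mem_toFinset.1 hU)
    rwa [max_sub_min_eq_abs, hwidth]
  · obtain ⟨ρ, -, hwidth, hosc, -⟩ := hcopy U (hfin.mem_toFinset.1 hU)
    rwa [max_sub_min_eq_abs, hwidth]
  · obtain ⟨U, hU, p, ⟨x, hx, rfl⟩, hUx⟩ := mem_iUnion₂.1 (hcovT ⟨z, hz, rfl⟩)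
    obtain ⟨ρ, -, -, -, hmaps⟩ := hcopy U hU
    have : φ U x = z := congrArg Prod.fst hUx
    exact mem_iUnion₂.2 ⟨U, hfin.mem_toFinset.2 hU, this ▸ hmaps hx⟩

lemma exists_differentiableAt_of_isSimilitudeCover (hf : ContinuousOn f (Icc 0 1)) {Ω : ℝ}
    (hΩ : ∀ x ∈ Icc (0 : ℝ) 1, ∀ y ∈ Icc (0 : ℝ) 1, |f x - f y| ≤ Ω)
    (hcov : ∀ δ > 0, ∃ T, IsSimilitudeCover ((Icc 0 1).graphOn f) δ T) :
    ∃ x ∈ Ioo 0 1, DifferentiableAt ℝ f x := by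
  by_cases hrot : ∃ (ρ θ : ℝ) (c : ℝ × ℝ), 0 < ρ ∧ Real.sin θ ≠ 0 ∧
      MapsTo (fun v => ρ • rot θ v + c) ((Icc 0 1).graphOn f) ((Icc 0 1).graphOn f)
  · obtain ⟨ρ, θ, c, hρ, hθ, hU⟩ := hrot
    exact exists_differentiableAt_of_mapsTo_rot hf hρ hθ hU
  · have hsin : ∀ (ρ θ : ℝ) (c : ℝ × ℝ), 0 < ρ →
        MapsTo (fun v => ρ • rot θ v + c) ((Icc 0 1).graphOn f) ((Icc 0 1).graphOn f) →
        Real.sin θ = 0 := fun ρ θ c hρ hU => by_contra fun hθ => hrot ⟨ρ, θ, c, hρ, hθ, hU⟩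
    exact (lipschitzOnWith_of_forall_sin_eq_zero hΩ hcov hsin).locallyBoundedVariationOn
      |>.exists_differentiableAt zero_lt_one

lemma abs_cross_sub_le {p q w : ℝ × ℝ} {x₀ h k : ℝ} (hp : |p.1 - x₀| ≤ h ∧ |p.2| ≤ k)
    (hq : |q.1 - x₀| ≤ h ∧ |q.2| ≤ k) (hw : |w.1 - x₀| ≤ h ∧ |w.2| ≤ k) :
    |cross (q - p) (w - p)| ≤ 8 * h * k := by
  simp only [abs_le] at hp hq hw
  have hqp1 : |q.1 - p.1| ≤ 2 * h := abs_le.2 ⟨by linarith, by linarith⟩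
  have hwp1 : |w.1 - p.1| ≤ 2 * h := abs_le.2 ⟨by linarith, by linarith⟩
  have hqp2 : |q.2 - p.2| ≤ 2 * k := abs_le.2 ⟨by linarith, by linarith⟩
  have hwp2 : |w.2 - p.2| ≤ 2 * k := abs_le.2 ⟨by linarith, by linarith⟩
  have hh : 0 ≤ h := by linarith
  have hk : 0 ≤ k := by linarith
  calc |cross (q - p) (w - p)|
      ≤ |q.1 - p.1| * |w.2 - p.2| + |q.2 - p.2| * |w.1 - p.1| := by
        simp only [cross, Prod.fst_sub, Prod.snd_sub, ← abs_mul]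
        exact abs_sub _ _
    _ ≤ 2 * h * (2 * k) + 2 * k * (2 * h) := by
        gcongr
    _ = 8 * h * k := by ring

lemma sq_mul_abs_sub_affine_le {U : ℝ × ℝ → ℝ × ℝ} {ρ x₀ m h k : ℝ}
    (hUρ : IsSimilitudeWith ρ U) (hU : MapsTo U ((Icc 0 1).graphOn f) ((Icc 0 1).graphOn f))
    (hnear : ∀ x ∈ Icc (0 : ℝ) 1, |(U (x, f x)).1 - x₀| ≤ h ∧
      |f (U (x, f x)).1 - f x₀ - ((U (x, f x)).1 - x₀) * m| ≤ k)
    {y : ℝ} (hy : y ∈ Icc (0 : ℝ) 1) :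
    ρ ^ 2 * |f y - (f 0 + (f 1 - f 0) * y)| ≤ 8 * h * k := by
  have h0 : (0 : ℝ) ∈ Icc (0 : ℝ) 1 := left_mem_Icc.2 zero_le_one
  have h1 : (1 : ℝ) ∈ Icc (0 : ℝ) 1 := right_mem_Icc.2 zero_le_one
  set e : ℝ → ℝ := fun w => f w - f x₀ - (w - x₀) * m
  -- subtracting the tangent line is a shear, which preserves `cross`
  have hshear : ∀ u v w : ℝ, cross ((v, f v) - (u, f u)) ((w, f w) - (u, f u)) =
      cross ((v, e v) - (u, e u)) ((w, e w) - (u, e u)) := fun u v w => by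
    simp only [cross, e, Prod.mk_sub_mk]
    ring
  have hscale := hUρ.cross_sub (0, f 0) (1, f 1) (y, f y)
  rw [(hU.apply_mem_graphOn h0).2, (hU.apply_mem_graphOn h1).2,
    (hU.apply_mem_graphOn hy).2, hshear] at hscale
  have hA : cross ((1, f 1) - (0, f 0)) ((y, f y) - (0, f 0)) = f y - (f 0 + (f 1 - f 0) * y) := by
    simp only [cross, Prod.mk_sub_mk]
    ring
  rw [← abs_of_nonneg (sq_nonneg ρ), ← abs_mul, ← hA, ← hscale]
  exact abs_cross_sub_le (p := ((U (0, f 0)).1, e (U (0, f 0)).1))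
    (q := ((U (1, f 1)).1, e (U (1, f 1)).1)) (w := ((U (y, f y)).1, e (U (y, f y)).1))
    (hnear 0 h0) (hnear 1 h1) (hnear y hy)

theorem eq_affine_of_differentiableAt {Ω : ℝ}
    (hΩ : ∀ x ∈ Icc (0 : ℝ) 1, ∀ y ∈ Icc (0 : ℝ) 1, |f x - f y| ≤ Ω)
    (hcov : ∀ δ > 0, ∃ T, IsSimilitudeCover ((Icc 0 1).graphOn f) δ T)
    {x₀ : ℝ} (hx₀ : x₀ ∈ Icc (0 : ℝ) 1) (hd : DifferentiableAt ℝ f x₀)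
    {y : ℝ} (hy : y ∈ Icc (0 : ℝ) 1) : f y = f 0 + (f 1 - f 0) * y := by
  have h0 : (0 : ℝ) ∈ Icc (0 : ℝ) 1 := left_mem_Icc.2 zero_le_one
  have hΩ0 : 0 ≤ Ω := by simpa using hΩ 0 h0 0 h0
  suffices key : ∀ ε > 0, |f y - (f 0 + (f 1 - f 0) * y)| ≤ 8 * (1 + Ω) ^ 2 * ε by
    have : |f y - (f 0 + (f 1 - f 0) * y)| ≤ 0 := le_of_forall_pos_le_add fun ε hε => by
      have := key (ε / (8 * (1 + Ω) ^ 2)) (by positivity)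
      rwa [mul_div_cancel₀ _ (by positivity), ← zero_add ε] at this
    linarith [abs_nonpos_iff.1 this]
  intro ε hε
  obtain ⟨η, hη, hlin⟩ := Metric.eventually_nhds_iff.1
    ((hasDerivAt_iff_isLittleO.1 hd.hasDerivAt).bound hε)
  obtain ⟨T, -, hT, hcovT⟩ := hcov (η / (2 * (1 + Ω))) (by positivity)
  obtain ⟨U, hU, _, ⟨t₀, ht₀, rfl⟩, hUt₀⟩ := mem_iUnion₂.1 (hcovT ⟨x₀, hx₀, rfl⟩)
  obtain ⟨hUG, ρ, hρ, hρη, hUρ⟩ := hT U hU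
  have hη' : ρ * (1 + Ω) < η := by
    rw [le_div_iff₀ (by positivity)] at hρη
    nlinarith
  have hnear : ∀ x ∈ Icc (0 : ℝ) 1, |(U (x, f x)).1 - x₀| ≤ ρ * (1 + Ω) ∧
      |f (U (x, f x)).1 - f x₀ - ((U (x, f x)).1 - x₀) * deriv f x₀| ≤ ε * (ρ * (1 + Ω)) := by
    intro x hx
    have hdist : |(U (x, f x)).1 - x₀| ≤ ρ * (1 + Ω) := by
      have hx₀U : (U (t₀, f t₀)).1 = x₀ := congrArg Prod.fst hUt₀
      rw [← hx₀U]
      refine (hUρ.abs_fst_sub_le hρ.le _ _).trans (mul_le_mul_of_nonneg_left ?_ hρ.le)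
      exact add_le_add (abs_sub_le_iff.2 ⟨by linarith [hx.2, ht₀.1], by linarith [hx.1, ht₀.2]⟩)
        (hΩ x hx t₀ ht₀)
    have := hlin (show dist (U (x, f x)).1 x₀ < η by rw [Real.dist_eq]; linarith)
    rw [Real.norm_eq_abs, Real.norm_eq_abs, smul_eq_mul] at this
    exact ⟨hdist, this.trans (mul_le_mul_of_nonneg_left hdist hε.le)⟩
  have := sq_mul_abs_sub_affine_le hUρ hUG hnear hy
  refine le_of_mul_le_mul_left ?_ (by positivity : 0 < ρ ^ 2)
  linarith

end Graph

theorem selfSimilar_graph_is_affine (f : ℝ → ℝ)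
    (hf : ContinuousOn f (Set.Icc (0 : ℝ) 1))
    (G : Set (ℝ × ℝ)) (hG : G = (fun x => (x, f x)) '' Set.Icc (0 : ℝ) 1)
    (hss : IsSelfSimilar G) :
    ∀ x ∈ Set.Icc (0 : ℝ) 1, f x = f 0 + (f 1 - f 0) * x := by
  subst hG
  have hcov : ∀ δ > 0, ∃ T, IsSimilitudeCover ((Icc 0 1).graphOn f) δ T :=
    fun _ hδ => hss.exists_isSimilitudeCover hδ
  obtain ⟨Ω, hΩ⟩ : ∃ Ω, ∀ x ∈ Icc (0 : ℝ) 1, ∀ y ∈ Icc (0 : ℝ) 1, |f x - f y| ≤ Ω := by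
    obtain ⟨C, hC⟩ := Metric.isBounded_iff.1 (isCompact_Icc.image_of_continuousOn hf).isBounded
    exact ⟨C, fun x hx y hy => hC (mem_image_of_mem f hx) (mem_image_of_mem f hy)⟩
  obtain ⟨x₀, hx₀, hd⟩ := exists_differentiableAt_of_isSimilitudeCover hf hΩ hcov
  exact fun y hy => eq_affine_of_differentiableAt hΩ hcov (Ioo_subset_Icc_self hx₀) hd hy
end

section
/- Let f : [0,1] → ℝ be continuous, and suppose its graph G = {(x, f(x)) : x ∈ [0,1]} is a self-similar set. Let ω_f = sup_{x,y ∈ [0,1]} |f(x) − f(y)|. Then f is Lipschitz; more precisely, |f(x) − f(y)| ≤ 4·ω_f·|x − y| for all x, y ∈ [0,1]. -/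
/-!
A similitude `v ↦ r • rot θ v + b` maps chords of the graph to chords of the graph, turning
their directions by `-θ`. The directions of chords, as angles in `(-π/2, π/2)`, form an interval
(the graph has no vertical chord), and an interval of such angles is mapped into itself modulo `π`
only by a trivial rotation; hence every similitude acts as `x ↦ ρ x + c` on the graph with
`|ρ| = r < 1`. Iterating, `[0, 1]` is covered by finitely many arbitrarily short intervals on each
of which `f` oscillates by at most `ω` times the length, and a greedy chain through such a cover
gives `|f x - f y| ≤ 2 ω (|x - y| + ε)`.
-/

open Real Set Topology Filter

theorem eq_zero_of_forall_sub_mem {A : Set ℝ} (hA : Bornology.IsBounded A) (hne : A.Nonempty)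
    {c : ℝ} (h : ∀ a ∈ A, a - c ∈ A) : c = 0 := by
  have hinf : sInf A + c ≤ sInf A :=
    le_csInf hne fun a ha => by linarith [csInf_le hA.bddBelow (h a ha)]
  have hsup : sSup A ≤ sSup A + c :=
    csSup_le hne fun a ha => by linarith [le_csSup hA.bddAbove (h a ha)]
  linarith

theorem int_eq_of_sub_mem {A : Set ℝ} (hA : IsPreconnected A) (hsub : A ⊆ Ioo (-(π / 2)) (π / 2))
    {θ : ℝ} (h : ∀ α ∈ A, ∃ m : ℤ, α - θ - m * π ∈ A) {α₁ α₂ : ℝ} {m₁ m₂ : ℤ}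
    (hα₁ : α₁ ∈ A) (hα₂ : α₂ ∈ A) (h₁ : α₁ - θ - m₁ * π ∈ A) (h₂ : α₂ - θ - m₂ * π ∈ A) :
    m₁ = m₂ := by
  wlog hlt : m₁ < m₂ generalizing α₁ α₂ m₁ m₂
  · rcases (not_lt.1 hlt).eq_or_lt with h | h
    exacts [h.symm, (this hα₂ hα₁ h₂ h₁ h).symm]
  -- otherwise the angle `θ + m₁ * π + π / 2`, which lies between `α₁` and `α₂`, would be
  -- rotated to the vertical
  exfalso
  have hm : ((m₁ + 1 : ℤ) : ℝ) * π ≤ m₂ * π :=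
    mul_le_mul_of_nonneg_right (by exact_mod_cast hlt) pi_pos.le
  push_cast at hm
  obtain ⟨m, hm⟩ := h (θ + m₁ * π + π / 2)
    (hA.Icc_subset hα₁ hα₂ ⟨by linarith [(hsub h₁).2], by linarith [(hsub h₂).1]⟩)
  obtain ⟨hlo, hhi⟩ := hsub hm
  obtain hk | hk : 0 ≤ m₁ - m ∨ m₁ - m + 1 ≤ 0 := by omega
  · have : 0 ≤ ((m₁ - m : ℤ) : ℝ) * π := mul_nonneg (by exact_mod_cast hk) pi_pos.le
    push_cast at this
    linarith
  · have : ((m₁ - m + 1 : ℤ) : ℝ) * π ≤ 0 :=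
      mul_nonpos_of_nonpos_of_nonneg (by exact_mod_cast hk) pi_pos.le
    push_cast at this
    linarith

theorem sin_eq_zero_of_forall_exists_sub_mem {A : Set ℝ} (hA : IsPreconnected A)
    (hne : A.Nonempty) (hsub : A ⊆ Ioo (-(π / 2)) (π / 2)) {θ : ℝ}
    (h : ∀ α ∈ A, ∃ m : ℤ, α - θ - m * π ∈ A) : sin θ = 0 := by
  obtain ⟨α₀, hα₀⟩ := hne
  obtain ⟨m₀, hm₀⟩ := h α₀ hα₀
  have hshift : ∀ α ∈ A, α - (θ + m₀ * π) ∈ A := by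
    intro α hα
    obtain ⟨m, hm⟩ := h α hα
    obtain rfl := int_eq_of_sub_mem hA hsub h hα hα₀ hm hm₀
    rwa [← sub_sub]
  have := eq_zero_of_forall_sub_mem (Metric.isBounded_Ioo _ _ |>.subset hsub) ⟨α₀, hα₀⟩ hshift
  rw [show θ = -m₀ * π by linarith, neg_mul, sin_neg, sin_int_mul_pi, neg_zero]

theorem sin_arctan_eq_mul_cos (t : ℝ) : sin (arctan t) = t * cos (arctan t) := by
  have h := tan_arctan t
  rwa [tan_eq_sin_div_cos, div_eq_iff (cos_arctan_pos t).ne'] at h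

theorem exists_int_arctan_tan_eq {β : ℝ} (hβ : cos β ≠ 0) :
    ∃ m : ℤ, arctan (tan β) = β - m * π := by
  have : sin (arctan (tan β) - β) = 0 := by
    rw [sin_sub, sin_arctan_eq_mul_cos, mul_right_comm, tan_mul_cos hβ]
    ring
  obtain ⟨n, hn⟩ := sin_eq_zero_iff.1 this
  exact ⟨-n, by push_cast; linarith⟩

def chordAngles (f : ℝ → ℝ) (s : Set ℝ) : Set ℝ :=
  (fun p : ℝ × ℝ => arctan ((f p.1 - f p.2) / (p.1 - p.2))) ''
    {p | p.1 ∈ s ∧ p.2 ∈ s ∧ p.2 < p.1}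

section chordAngles

variable {f : ℝ → ℝ} {s : Set ℝ}

theorem chordAngles_subset_Ioo : chordAngles f s ⊆ Ioo (-(π / 2)) (π / 2) := by
  rintro _ ⟨p, -, rfl⟩
  exact ⟨neg_pi_div_two_lt_arctan _, arctan_lt_pi_div_two _⟩

theorem isPreconnected_chordAngles (hs : Convex ℝ s) (hf : ContinuousOn f s) :
    IsPreconnected (chordAngles f s) := by
  have hconv : Convex ℝ {p : ℝ × ℝ | p.1 ∈ s ∧ p.2 ∈ s ∧ p.2 < p.1} := by
    convert (hs.prod hs).inter (convex_halfSpace_gt IsLinearMap.isLinearMap_sub 0) using 1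
    ext p
    simp [sub_pos, and_assoc]
  refine hconv.isPreconnected.image _ (continuous_arctan.comp_continuousOn ?_)
  refine ((hf.comp continuousOn_fst fun p hp => hp.1).sub
    (hf.comp continuousOn_snd fun p hp => hp.2.1)).div
    (continuous_fst.sub continuous_snd).continuousOn fun p hp => ?_
  exact sub_ne_zero.2 hp.2.2.ne'

theorem exists_int_sub_mem_chordAngles {u v β l : ℝ} (hu : u ∈ s) (hv : v ∈ s) (hl : l ≠ 0)
    (h₁ : u - v = l * cos β) (h₂ : f u - f v = l * sin β) :
    ∃ m : ℤ, β - m * π ∈ chordAngles f s := by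
  wlog hvu : v < u generalizing u v l
  · rcases (not_lt.1 hvu).eq_or_lt with rfl | hlt
    · have hcos : cos β = 0 := by simpa [hl] using h₁.symm
      have hsin : sin β = 0 := by simpa [hl] using h₂.symm
      simpa [hcos, hsin] using sin_sq_add_cos_sq β
    · exact this hv hu (neg_ne_zero.2 hl) (by linarith) (by linarith) hlt
  have hcβ : cos β ≠ 0 := by
    rintro h
    rw [h, mul_zero] at h₁
    linarith
  have hslope : (f u - f v) / (u - v) = tan β := by
    rw [h₁, h₂, tan_eq_sin_div_cos, mul_div_mul_left _ _ hl]
  obtain ⟨m, hm⟩ := exists_int_arctan_tan_eq hcβ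
  exact ⟨m, hm ▸ hslope ▸ ⟨(u, v), ⟨hu, hv, hvu⟩, rfl⟩⟩

theorem exists_sub_mem_chordAngles_of_mapsTo {r θ : ℝ} {b : ℝ × ℝ} (hr : r ≠ 0)
    (hS : MapsTo (fun v => r • rot θ v + b) (graphOn f s) (graphOn f s)) {α : ℝ}
    (hα : α ∈ chordAngles f s) : ∃ m : ℤ, α - θ - m * π ∈ chordAngles f s := by
  obtain ⟨⟨u, v⟩, ⟨hu, hv, hvu⟩, rfl⟩ := hα
  set α := arctan ((f u - f v) / (u - v))
  set l := (u - v) / cos α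
  have hcos : cos α ≠ 0 := (cos_arctan_pos _).ne'
  have h₁ : u - v = l * cos α := (div_mul_cancel₀ _ hcos).symm
  have h₂ : f u - f v = l * sin α := by
    rw [sin_arctan_eq_mul_cos, ← mul_assoc, mul_comm l, mul_assoc, ← h₁,
      div_mul_cancel₀ _ (sub_pos.2 hvu).ne']
  obtain ⟨hu', hfu'⟩ := mem_graphOn.1 (hS ⟨u, hu, rfl⟩)
  obtain ⟨hv', hfv'⟩ := mem_graphOn.1 (hS ⟨v, hv, rfl⟩)
  beta_reduce at hfu' hfv'
  refine exists_int_sub_mem_chordAngles (l := r * l) hu' hv' (mul_ne_zero hr ?_) ?_ ?_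
  · intro hl
    rw [hl, zero_mul] at h₁
    linarith
  · simp only [rot, Prod.smul_fst, Prod.fst_add, smul_eq_mul, cos_sub]
    linear_combination r * cos θ * h₁ + r * sin θ * h₂
  · rw [hfu', hfv']
    simp only [rot, Prod.smul_snd, Prod.snd_add, smul_eq_mul, sin_sub]
    linear_combination r * cos θ * h₂ - r * sin θ * h₁

theorem sin_eq_zero_of_mapsTo_graphOn (hs : Convex ℝ s) (hf : ContinuousOn f s)
    (hs₂ : ∃ u ∈ s, ∃ v ∈ s, v < u) {r θ : ℝ} {b : ℝ × ℝ} (hr : r ≠ 0)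
    (hS : MapsTo (fun v => r • rot θ v + b) (graphOn f s) (graphOn f s)) : sin θ = 0 := by
  obtain ⟨u, hu, v, hv, hvu⟩ := hs₂
  exact sin_eq_zero_of_forall_exists_sub_mem (isPreconnected_chordAngles hs hf)
    ⟨_, (u, v), ⟨hu, hv, hvu⟩, rfl⟩ chordAngles_subset_Ioo
    fun α => exists_sub_mem_chordAngles_of_mapsTo hr hS

end chordAngles

section chain

variable {ι : Type*} {a b : ι → ℝ}

theorem exists_mem_Icc_lt_right {s : Finset ι} {t y : ℝ} (hty : t < y)
    (hcov : Ioc t y ⊆ ⋃ i ∈ s, Icc (a i) (b i)) : ∃ i ∈ s, a i ≤ t ∧ t < b i := by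
  classical
  set C := ⋃ i ∈ s.filter (t < a ·), Icc (a i) (b i)
  have hC : Cᶜ ∈ 𝓝 t := by
    refine (isClosed_biUnion_finset fun i _ => isClosed_Icc).isOpen_compl.mem_nhds ?_
    simp only [mem_compl_iff, mem_iUnion, Finset.mem_filter, not_exists]
    exact fun i ⟨_, hi⟩ hti => hi.not_ge hti.1
  obtain ⟨z, hz, hzC⟩ :=
    Filter.nonempty_of_mem (Filter.inter_mem (Ioc_mem_nhdsGT hty) (nhdsWithin_le_nhds hC))
  obtain ⟨i, hi, hzi⟩ := mem_iUnion₂.1 (hcov hz)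
  refine ⟨i, hi, not_lt.1 fun hti => hzC ?_, hz.1.trans_le hzi.2⟩
  exact mem_iUnion₂.2 ⟨i, Finset.mem_filter.2 ⟨hi, hti⟩, hzi⟩

variable {f : ℝ → ℝ} {ω w : ℝ}

-- `p` is the previous stop of the greedy chain: every piece reaching past `t` starts after `p`,
-- so the pieces used overlap only pairwise.
theorem abs_sub_le_of_Ioc_subset_biUnion (hω : 0 ≤ ω) (hw : 0 ≤ w) {s : Finset ι}
    (hlen : ∀ i ∈ s, b i - a i ≤ w)
    (hosc : ∀ i ∈ s, ∀ u ∈ Icc (a i) (b i), ∀ v ∈ Icc (a i) (b i), |f u - f v| ≤ ω * (b i - a i))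
    {p t y : ℝ} (hpt : p ≤ t) (hty : t ≤ y) (hcov : Ioc t y ⊆ ⋃ i ∈ s, Icc (a i) (b i))
    (hleft : ∀ i ∈ s, a i ≤ t → t < b i → p ≤ a i) :
    |f t - f y| ≤ ω * (2 * (y - t) + (t - p) + w) := by
  classical
  induction s using Finset.strongInduction generalizing p t with
  | H s ih =>
  rcases hty.eq_or_lt with rfl | hty
  · rw [sub_self, abs_zero]
    exact mul_nonneg hω (by linarith)
  obtain ⟨i₀, hi₀, hi₀t⟩ := exists_mem_Icc_lt_right hty hcov
  obtain ⟨i, hi, hmax⟩ := (s.filter fun i => a i ≤ t ∧ t < b i).exists_max_image b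
    ⟨i₀, Finset.mem_filter.2 ⟨hi₀, hi₀t⟩⟩
  obtain ⟨hi, hat, htb⟩ := Finset.mem_filter.1 hi
  have hpa := hleft i hi hat htb
  rcases le_or_gt y (b i) with hyb | hby
  · calc |f t - f y| ≤ ω * (b i - a i) := hosc i hi t ⟨hat, htb.le⟩ y ⟨by linarith, hyb⟩
      _ ≤ ω * (2 * (y - t) + (t - p) + w) :=
        mul_le_mul_of_nonneg_left (by linarith [hlen i hi]) hω
  -- continue from the right end `b i`, discarding the pieces that end before it
  set s' := s.filter (b i < b ·)
  have hs' : s' ⊂ s := Finset.filter_ssubset.2 ⟨i, hi, lt_irrefl _⟩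
  have hcov' : Ioc (b i) y ⊆ ⋃ j ∈ s', Icc (a j) (b j) := by
    intro z hz
    obtain ⟨j, hj, hzj⟩ := mem_iUnion₂.1 (hcov ⟨htb.trans hz.1, hz.2⟩)
    exact mem_iUnion₂.2 ⟨j, Finset.mem_filter.2 ⟨hj, hz.1.trans_le hzj.2⟩, hzj⟩
  have hleft' : ∀ j ∈ s', a j ≤ b i → b i < b j → t ≤ a j := by
    intro j hj _ hbj
    by_contra! hjt
    have := hmax j (Finset.mem_filter.2 ⟨(Finset.mem_filter.1 hj).1, hjt.le, htb.trans hbj⟩)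
    linarith
  have hrest := ih s' hs' (fun j hj => hlen j (Finset.mem_of_mem_filter j hj))
    (fun j hj => hosc j (Finset.mem_of_mem_filter j hj)) htb.le hby.le hcov' hleft'
  have hfirst : |f t - f (b i)| ≤ ω * ((b i - t) + (t - p)) :=
    (hosc i hi t ⟨hat, htb.le⟩ (b i) ⟨hat.trans htb.le, le_rfl⟩).trans
      (mul_le_mul_of_nonneg_left (by linarith) hω)
  calc |f t - f y| ≤ |f t - f (b i)| + |f (b i) - f y| := abs_sub_le _ _ _
    _ ≤ ω * ((b i - t) + (t - p)) + ω * (2 * (y - b i) + (b i - t) + w) := add_le_add hfirst hrest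
    _ = ω * (2 * (y - t) + (t - p) + w) := by ring

theorem abs_sub_le_of_Icc_subset_biUnion (hω : 0 ≤ ω) (hw : 0 ≤ w) {s : Finset ι}
    (hlen : ∀ i ∈ s, b i - a i ≤ w)
    (hosc : ∀ i ∈ s, ∀ u ∈ Icc (a i) (b i), ∀ v ∈ Icc (a i) (b i), |f u - f v| ≤ ω * (b i - a i))
    {x y : ℝ} (hxy : x ≤ y) (hcov : Icc x y ⊆ ⋃ i ∈ s, Icc (a i) (b i)) :
    |f x - f y| ≤ 2 * ω * (y - x + w) := by
  have := abs_sub_le_of_Ioc_subset_biUnion hω hw hlen hosc (p := x - w) (by linarith) hxy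
    (Ioc_subset_Icc_self.trans hcov) fun i hi _ hxb => by linarith [hlen i hi]
  linarith

end chain

def smulAdd {E : Type*} [AddCommGroup E] [Module ℝ E] (p : ℝ × E) (v : E) : E := p.1 • v + p.2

section smulAdd

variable {E : Type*} [AddCommGroup E] [Module ℝ E]

theorem smulAdd_smulAdd (p q : ℝ × E) (v : E) :
    smulAdd p (smulAdd q v) = smulAdd (p.1 * q.1, p.1 • q.2 + p.2) v := by
  simp only [smulAdd, smul_add, mul_smul, add_assoc]

theorem exists_finset_smulAdd_cover_pow {K : Set E} {P : Finset (ℝ × E)} {β : ℝ}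
    (hP : ∀ p ∈ P, |p.1| ≤ β ∧ MapsTo (smulAdd p) K K) (hK : K ⊆ ⋃ p ∈ P, smulAdd p '' K)
    (n : ℕ) : ∃ Q : Finset (ℝ × E),
      (∀ q ∈ Q, |q.1| ≤ β ^ n ∧ MapsTo (smulAdd q) K K) ∧ K ⊆ ⋃ q ∈ Q, smulAdd q '' K := by
  classical
  induction n with
  | zero =>
    have hid : smulAdd ((1, 0) : ℝ × E) = id := funext fun v => by simp [smulAdd]
    refine ⟨{(1, 0)}, by simpa [hid] using mapsTo_id K, fun v hv => ?_⟩
    simpa [hid] using hv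
  | succ n ih =>
    obtain ⟨Q, hQ, hKQ⟩ := ih
    refine ⟨(P ×ˢ Q).image fun pq => (pq.1.1 * pq.2.1, pq.1.1 • pq.2.2 + pq.1.2), ?_, ?_⟩
    · intro r hr
      obtain ⟨⟨p, q⟩, hpq, rfl⟩ := Finset.mem_image.1 hr
      obtain ⟨hρ, hpK⟩ := hP p (Finset.mem_product.1 hpq).1
      obtain ⟨hρ', hqK⟩ := hQ q (Finset.mem_product.1 hpq).2
      refine ⟨?_, fun v hv => ?_⟩
      · rw [abs_mul, pow_succ']
        exact mul_le_mul hρ hρ' (abs_nonneg _) ((abs_nonneg _).trans hρ)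
      · rw [← smulAdd_smulAdd]
        exact hpK (hqK hv)
    · intro v hv
      obtain ⟨p, hp, w, hw, rfl⟩ := mem_iUnion₂.1 (hK hv)
      obtain ⟨q, hq, u, hu, rfl⟩ := mem_iUnion₂.1 (hKQ hw)
      exact mem_iUnion₂.2 ⟨_, Finset.mem_image_of_mem _ (Finset.mk_mem_product hp hq), u, hu,
        (smulAdd_smulAdd p q u).symm⟩

end smulAdd

theorem rot_eq_cos_smul {θ : ℝ} (h : sin θ = 0) (v : ℝ × ℝ) : rot θ v = cos θ • v := by
  ext <;> simp [rot, h, mul_comm]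

theorem exists_eq_smulAdd_of_mapsTo_graphOn {f : ℝ → ℝ} {s : Set ℝ} (hs : Convex ℝ s)
    (hf : ContinuousOn f s) (hs₂ : ∃ u ∈ s, ∃ v ∈ s, v < u) {r θ : ℝ} {b : ℝ × ℝ} (hr : 0 < r)
    (hS : MapsTo (fun v => r • rot θ v + b) (graphOn f s) (graphOn f s)) :
    ∃ ρ : ℝ, |ρ| = r ∧ (fun v => r • rot θ v + b) = smulAdd (ρ, b) := by
  have hsin := sin_eq_zero_of_mapsTo_graphOn hs hf hs₂ hr.ne' hS
  refine ⟨r * cos θ, ?_, funext fun v => ?_⟩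
  · rw [abs_mul, abs_cos_eq_one_iff.2 (sin_eq_zero_iff.1 hsin), mul_one, abs_of_pos hr]
  · rw [rot_eq_cos_smul hsin, smul_smul]
    rfl

theorem image_mul_add_Icc_zero_one (ρ c : ℝ) :
    (fun x => ρ * x + c) '' Icc 0 1 = uIcc c (ρ + c) := by
  rw [← uIcc_of_le zero_le_one, ← image_image (· + c) (ρ * ·), image_const_mul_uIcc,
    image_add_const_uIcc, mul_zero, mul_one, zero_add]

section graph

variable {f : ℝ → ℝ}

theorem abs_sub_le_of_mapsTo_smulAdd {ω : ℝ}
    (hω : ∀ x ∈ Icc (0 : ℝ) 1, ∀ y ∈ Icc (0 : ℝ) 1, |f x - f y| ≤ ω) {p : ℝ × (ℝ × ℝ)}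
    (hp : MapsTo (smulAdd p) (graphOn f (Icc 0 1)) (graphOn f (Icc 0 1))) {u v : ℝ}
    (hu : u ∈ uIcc p.2.1 (p.1 + p.2.1)) (hv : v ∈ uIcc p.2.1 (p.1 + p.2.1)) :
    |f u - f v| ≤ ω * |p.1| := by
  have hfeq : ∀ x ∈ Icc (0 : ℝ) 1, f (p.1 * x + p.2.1) = p.1 * f x + p.2.2 :=
    fun x hx => (mem_graphOn.1 (hp ⟨x, hx, rfl⟩)).2
  rw [← image_mul_add_Icc_zero_one] at hu hv
  obtain ⟨x, hx, rfl⟩ := hu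
  obtain ⟨y, hy, rfl⟩ := hv
  rw [hfeq x hx, hfeq y hy, add_sub_add_right_eq_sub, ← mul_sub, abs_mul, mul_comm]
  exact mul_le_mul_of_nonneg_right (hω x hx y hy) (abs_nonneg _)

theorem Icc_subset_biUnion_uIcc_of_subset_biUnion_smulAdd {P : Finset (ℝ × (ℝ × ℝ))}
    (hP : graphOn f (Icc 0 1) ⊆ ⋃ p ∈ P, smulAdd p '' graphOn f (Icc 0 1)) :
    Icc 0 1 ⊆ ⋃ p ∈ P, uIcc p.2.1 (p.1 + p.2.1) := by
  intro z hz
  obtain ⟨p, hp, _, ⟨x, hx, rfl⟩, hxz⟩ := mem_iUnion₂.1 (hP ⟨z, hz, rfl⟩)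
  refine mem_iUnion₂.2 ⟨p, hp, ?_⟩
  rw [← image_mul_add_Icc_zero_one]
  exact ⟨x, hx, congrArg Prod.fst hxz⟩

theorem abs_sub_le_of_subset_biUnion_smulAdd {ω β : ℝ}
    (hω : ∀ x ∈ Icc (0 : ℝ) 1, ∀ y ∈ Icc (0 : ℝ) 1, |f x - f y| ≤ ω) (hβ₀ : 0 ≤ β) (hβ₁ : β < 1)
    {P : Finset (ℝ × (ℝ × ℝ))}
    (hP : ∀ p ∈ P, |p.1| ≤ β ∧ MapsTo (smulAdd p) (graphOn f (Icc 0 1)) (graphOn f (Icc 0 1)))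
    (hcov : graphOn f (Icc 0 1) ⊆ ⋃ p ∈ P, smulAdd p '' graphOn f (Icc 0 1))
    {x y : ℝ} (hx : x ∈ Icc 0 1) (hy : y ∈ Icc 0 1) : |f x - f y| ≤ 2 * ω * |x - y| := by
  wlog hxy : x ≤ y generalizing x y
  · rw [abs_sub_comm (f x), abs_sub_comm x]
    exact this hy hx (le_of_not_ge hxy)
  have hω₀ : 0 ≤ ω := (abs_nonneg _).trans (hω x hx x hx)
  have hwidth : ∀ q : ℝ × (ℝ × ℝ), max q.2.1 (q.1 + q.2.1) - min q.2.1 (q.1 + q.2.1) = |q.1| :=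
    fun q => by rw [max_sub_min_eq_abs', sub_add_cancel_right, abs_neg]
  have hn : ∀ n : ℕ, |f x - f y| ≤ 2 * ω * (y - x + β ^ n) := by
    intro n
    obtain ⟨Q, hQ, hQcov⟩ := exists_finset_smulAdd_cover_pow hP hcov n
    have hxyQ : Icc x y ⊆ ⋃ q ∈ Q, Icc (min q.2.1 (q.1 + q.2.1)) (max q.2.1 (q.1 + q.2.1)) :=
      (Icc_subset_Icc hx.1 hy.2).trans (Icc_subset_biUnion_uIcc_of_subset_biUnion_smulAdd hQcov)
    refine abs_sub_le_of_Icc_subset_biUnion hω₀ (pow_nonneg hβ₀ n)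
      (fun q hq => (hwidth q).trans_le (hQ q hq).1) (fun q hq u hu v hv => ?_) hxy hxyQ
    rw [hwidth]
    exact abs_sub_le_of_mapsTo_smulAdd hω (hQ q hq).2 hu hv
  have hlim : Tendsto (fun n : ℕ => 2 * ω * (y - x + β ^ n)) atTop (𝓝 (2 * ω * (y - x + 0))) :=
    ((tendsto_pow_atTop_nhds_zero_of_lt_one hβ₀ hβ₁).const_add _).const_mul _
  rw [abs_sub_comm x, abs_of_nonneg (sub_nonneg.2 hxy)]
  simpa using ge_of_tendsto' hlim hn

end graph

theorem abs_sub_le_sSup_of_isCompact {X : Type*} [TopologicalSpace X] {f : X → ℝ} {s : Set X}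
    (hs : IsCompact s) (hf : ContinuousOn f s) {x y : X} (hx : x ∈ s) (hy : y ∈ s) :
    |f x - f y| ≤ sSup {d | ∃ x ∈ s, ∃ y ∈ s, d = |f x - f y|} := by
  refine le_csSup ?_ ⟨x, hx, y, hy, rfl⟩
  have := (hs.prod hs).bddAbove_image (f := fun p : X × X => |f p.1 - f p.2|)
    ((hf.comp continuousOn_fst fun p hp => hp.1).sub
      (hf.comp continuousOn_snd fun p hp => hp.2)).abs
  refine this.mono ?_
  rintro _ ⟨x, hx, y, hy, rfl⟩
  exact ⟨(x, y), ⟨hx, hy⟩, rfl⟩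

theorem selfSimilar_graph_is_lipschitz (f : ℝ → ℝ)
    (hf : ContinuousOn f (Set.Icc (0 : ℝ) 1))
    (G : Set (ℝ × ℝ)) (hG : G = (fun x => (x, f x)) '' Set.Icc (0 : ℝ) 1)
    (hss : IsSelfSimilar G)
    (ω : ℝ)
    (hω : ω = sSup {d : ℝ | ∃ x ∈ Set.Icc (0 : ℝ) 1, ∃ y ∈ Set.Icc (0 : ℝ) 1,
      d = |f x - f y|}) :
    ∀ x ∈ Set.Icc (0 : ℝ) 1, ∀ y ∈ Set.Icc (0 : ℝ) 1,
      |f x - f y| ≤ 4 * ω * |x - y| := by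
  obtain ⟨-, k, S, hk, hsim, hGS⟩ := hss
  choose r θ b hr hS using hsim
  obtain rfl : S = fun i v => r i • rot (θ i) v + b i := funext fun i => funext (hS i)
  subst hG
  have hmaps : ∀ i, MapsTo (fun v => r i • rot (θ i) v + b i) (graphOn f (Icc 0 1))
      (graphOn f (Icc 0 1)) := fun i v hv => hGS.superset (mem_iUnion.2 ⟨i, v, hv, rfl⟩)
  choose ρ hρ hρS using fun i => exists_eq_smulAdd_of_mapsTo_graphOn (convex_Icc 0 1) hf
    ⟨1, by simp, 0, by simp, one_pos⟩ (hr i).1 (hmaps i)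
  have hωle : ∀ x ∈ Icc (0 : ℝ) 1, ∀ y ∈ Icc (0 : ℝ) 1, |f x - f y| ≤ ω :=
    fun x hx y hy => hω ▸ abs_sub_le_sSup_of_isCompact isCompact_Icc hf hx hy
  have : Nonempty (Fin k) := ⟨⟨0, hk⟩⟩
  have hrβ : ∀ i, r i ≤ Finset.univ.sup' Finset.univ_nonempty r :=
    fun i => Finset.le_sup' r (Finset.mem_univ i)
  intro x hx y hy
  have hlip := abs_sub_le_of_subset_biUnion_smulAdd hωle ((hr ⟨0, hk⟩).1.le.trans (hrβ _))
    ((Finset.sup'_lt_iff _).2 fun i _ => (hr i).2) (P := Finset.univ.image fun i => (ρ i, b i))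
    ?_ ?_ hx hy
  · nlinarith [abs_nonneg (x - y), (abs_nonneg _).trans (hωle x hx x hx)]
  · simp only [Finset.mem_image, Finset.mem_univ, true_and, forall_exists_index]
    rintro _ i rfl
    exact ⟨(hρ i).trans_le (hrβ i), hρS i ▸ hmaps i⟩
  · intro v hv
    obtain ⟨i, w, hw, rfl⟩ := mem_iUnion.1 (hGS.subset hv)
    exact mem_iUnion₂.2 ⟨_, Finset.mem_image_of_mem _ (Finset.mem_univ i), w, hw,
      (congrFun (hρS i) w).symm⟩
end

section
/- Let f : [0,1] → ℝ be continuous with graph G = {(x, f(x)) : x ∈ [0,1]}, and let S : ℝ² → ℝ² be given by S(v) = ε·r·v + b with ε ∈ {1, −1}, r ∈ (0,1), b ∈ ℝ², and suppose S(G) ⊆ G. Then the projection J = {x : (x,y) ∈ S(G) for some y} to the first coordinate is a closed subinterval of [0,1] of length r, S(G) = {(x, f(x)) : x ∈ J}, and the oscillation satisfies ω_f(J) = r·ω_f([0,1]). -/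
/-- The oscillation of `f` on a set `J`: `sup_{x,y ∈ J} |f x − f y|`. -/
noncomputable def osc (f : ℝ → ℝ) (J : Set ℝ) : ℝ :=
  sSup {d : ℝ | ∃ x ∈ J, ∃ y ∈ J, d = |f x - f y|}

/-!
Since `S(x, f x) = (a x + b₁, a f x + b₂)` with `a = ε r`, the inclusion `S(G) ⊆ G` says exactly
that `x ↦ a x + b₁` maps `[0,1]` into itself and `f (a x + b₁) = a f x + b₂` there. Hence `S(G)`
is the graph of `f` over the affine image `J` of `[0,1]`, an interval of length `|a| = r`, and every
difference `|f x - f y|` over `J` is `|a|` times the corresponding one over `[0,1]`.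
-/

open Set Pointwise

section AffineImageOfGraph

variable {f : ℝ → ℝ} {I : Set ℝ} {a : ℝ} {b : ℝ × ℝ}

lemma image_smul_add_graph :
    (fun v : ℝ × ℝ => a • v + b) '' ((fun x => (x, f x)) '' I) =
      (fun x => (a * x + b.1, a * f x + b.2)) '' I := by
  rw [image_image]
  rfl

lemma mapsTo_and_eq_of_image_smul_add_graph_subset
    (h : (fun v : ℝ × ℝ => a • v + b) '' ((fun x => (x, f x)) '' I) ⊆ (fun x => (x, f x)) '' I) :
    MapsTo (fun x => a * x + b.1) I I ∧ ∀ x ∈ I, f (a * x + b.1) = a * f x + b.2 := by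
  rw [image_smul_add_graph] at h
  have hpoint : ∀ x ∈ I, a * x + b.1 ∈ I ∧ f (a * x + b.1) = a * f x + b.2 := by
    intro x hx
    obtain ⟨t, ht, hteq⟩ := h (mem_image_of_mem _ hx)
    obtain ⟨rfl, hft⟩ := Prod.ext_iff.mp hteq
    exact ⟨ht, hft⟩
  exact ⟨fun x hx => (hpoint x hx).1, fun x hx => (hpoint x hx).2⟩

lemma image_smul_add_graph_eq_graph_image (hf : ∀ x ∈ I, f (a * x + b.1) = a * f x + b.2) :
    (fun v : ℝ × ℝ => a • v + b) '' ((fun x => (x, f x)) '' I) =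
      (fun x => (x, f x)) '' ((fun x => a * x + b.1) '' I) := by
  rw [image_smul_add_graph, image_image]
  exact image_congr fun x hx => by rw [hf x hx]

end AffineImageOfGraph

lemma setOf_exists_mem_graph (f : ℝ → ℝ) (J : Set ℝ) :
    {x : ℝ | ∃ y : ℝ, (x, y) ∈ (fun x => (x, f x)) '' J} = J := by
  ext x
  simp

lemma image_affine_unitInterval (a c : ℝ) :
    (fun x => a * x + c) '' Icc 0 1 = uIcc c (a + c) := by
  have hcomp : (fun x => a * x + c) = (· + c) ∘ (a * ·) := rfl
  rw [hcomp, image_comp, ← uIcc_of_le zero_le_one, image_const_mul_uIcc,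
    image_add_const_uIcc, mul_zero, mul_one, zero_add]

lemma osc_image_of_eq_mul_add {f g : ℝ → ℝ} {I : Set ℝ} {a c : ℝ}
    (h : ∀ x ∈ I, f (g x) = a * f x + c) : osc f (g '' I) = |a| * osc f I := by
  have hdiff : ∀ x ∈ I, ∀ y ∈ I, |f (g x) - f (g y)| = |a| * |f x - f y| := by
    intro x hx y hy
    rw [h x hx, h y hy, ← abs_mul, add_sub_add_right_eq_sub, mul_sub]
  have hset : {d : ℝ | ∃ x ∈ g '' I, ∃ y ∈ g '' I, d = |f x - f y|} =
      |a| • {d : ℝ | ∃ x ∈ I, ∃ y ∈ I, d = |f x - f y|} := by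
    ext d
    simp only [mem_ofPred_eq, mem_smul_set, exists_mem_image, smul_eq_mul]
    constructor
    · rintro ⟨x, hx, y, hy, rfl⟩
      exact ⟨_, ⟨x, hx, y, hy, rfl⟩, (hdiff x hx y hy).symm⟩
    · rintro ⟨_, ⟨x, hx, y, hy, rfl⟩, rfl⟩
      exact ⟨x, hx, y, hy, (hdiff x hx y hy).symm⟩
  rw [osc, osc, hset, Real.sSup_smul_of_nonneg (abs_nonneg a), smul_eq_mul]

theorem image_of_graph_under_similitude_general (f : ℝ → ℝ)
    (G : Set (ℝ × ℝ)) (hG : G = (fun x => (x, f x)) '' Set.Icc (0 : ℝ) 1)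
    (ε r : ℝ) (hε : ε = 1 ∨ ε = -1) (hr : r ∈ Set.Ioo (0 : ℝ) 1) (b : ℝ × ℝ)
    (S : ℝ × ℝ → ℝ × ℝ) (hS : ∀ v, S v = (ε * r) • v + b)
    (hSG : S '' G ⊆ G)
    (J : Set ℝ) (hJ : J = {x : ℝ | ∃ y : ℝ, (x, y) ∈ S '' G}) :
    (∃ u v : ℝ, u ≤ v ∧ v - u = r ∧ J = Set.Icc u v ∧ J ⊆ Set.Icc (0 : ℝ) 1) ∧
      S '' G = (fun x => (x, f x)) '' J ∧
      osc f J = r * osc f (Set.Icc (0 : ℝ) 1) := by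
  obtain rfl : S = fun v => (ε * r) • v + b := funext hS
  subst hG hJ
  obtain ⟨hmaps, hfe⟩ := mapsTo_and_eq_of_image_smul_add_graph_subset hSG
  have habs : |ε * r| = r := by
    rw [abs_mul, abs_of_pos hr.1]
    rcases hε with rfl | rfl <;> simp
  rw [image_smul_add_graph_eq_graph_image hfe, setOf_exists_mem_graph]
  refine ⟨⟨_, _, min_le_max, ?_, image_affine_unitInterval _ _, hmaps.image_subset⟩, rfl,
    by rw [osc_image_of_eq_mul_add hfe, habs]⟩
  rw [max_sub_min_eq_abs, add_sub_cancel_right, habs]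

theorem image_of_graph_under_similitude (f : ℝ → ℝ)
    (hf : ContinuousOn f (Set.Icc (0 : ℝ) 1))
    (G : Set (ℝ × ℝ)) (hG : G = (fun x => (x, f x)) '' Set.Icc (0 : ℝ) 1)
    (ε r : ℝ) (hε : ε = 1 ∨ ε = -1) (hr : r ∈ Set.Ioo (0 : ℝ) 1) (b : ℝ × ℝ)
    (S : ℝ × ℝ → ℝ × ℝ) (hS : ∀ v, S v = (ε * r) • v + b)
    (hSG : S '' G ⊆ G)
    (J : Set ℝ) (hJ : J = {x : ℝ | ∃ y : ℝ, (x, y) ∈ S '' G}) :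
    (∃ u v : ℝ, u ≤ v ∧ v - u = r ∧ J = Set.Icc u v ∧ J ⊆ Set.Icc (0 : ℝ) 1) ∧
      S '' G = (fun x => (x, f x)) '' J ∧
      osc f J = r * osc f (Set.Icc (0 : ℝ) 1) :=
  image_of_graph_under_similitude_general f G hG ε r hε hr b S hS hSG J hJ
end

section
/- Let x < y be real numbers, and let I₁, …, I_m be closed bounded intervals, indexed so that their left endpoints are nondecreasing, whose union contains [x, y], and which form a minimal cover in the sense that for every j₀ ∈ {1,…,m} the union of the intervals I_j with j ≠ j₀ does not contain [x, y]. Then I_j ∩ I_{j+2} = ∅ for every j ∈ {1, …, m−2}. -/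
theorem minimal_cover_alternate_disjoint (x y : ℝ) (hxy : x < y)
    (m : ℕ) (a b : ℕ → ℝ)
    (hab : ∀ j < m, a j ≤ b j)
    (hmono : ∀ i j, i < m → j < m → i ≤ j → a i ≤ a j)
    (hcover : Set.Icc x y ⊆ ⋃ j ∈ Finset.range m, Set.Icc (a j) (b j))
    (hmin : ∀ j₀ ∈ Finset.range m,
      ¬ (Set.Icc x y ⊆ ⋃ j ∈ (Finset.range m).erase j₀, Set.Icc (a j) (b j))) :
    ∀ j, j + 2 < m → Set.Icc (a j) (b j) ∩ Set.Icc (a (j + 2)) (b (j + 2)) = ∅ := by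
  intro j hj
  by_contra hne
  obtain ⟨t, ⟨htj1, htj2⟩, htj3, htj4⟩ := Set.nonempty_iff_ne_empty.mpr hne
  have hj1 : j < m := by omega
  have hj2 : j + 1 < m := by omega
  have hmono12 : a j ≤ a (j+1) := hmono j (j+1) hj1 hj2 (by omega)
  have hmono23 : a (j+1) ≤ a (j+2) := hmono (j+1) (j+2) hj2 hj (by omega)
  have hab2 : a (j+2) ≤ b j := le_trans htj3 htj2
  by_cases hc : b (j+2) ≤ b (j+1)
  · -- I_{j+2} ⊆ I_{j+1}: remove j+2
    apply hmin (j+2) (Finset.mem_range.mpr hj)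
    intro p hp
    obtain hmem := hcover hp
    simp only [Set.mem_iUnion, exists_prop, Finset.mem_range, Finset.mem_erase] at hmem ⊢
    obtain ⟨k, hk, hpk⟩ := hmem
    by_cases hkj : k = j + 2
    · subst hkj
      exact ⟨j+1, ⟨by omega, hj2⟩, le_trans hmono23 hpk.1, le_trans hpk.2 hc⟩
    · exact ⟨k, ⟨hkj, hk⟩, hpk⟩
  · -- I_{j+1} ⊆ I_j ∪ I_{j+2}: remove j+1
    push_neg at hc
    apply hmin (j+1) (Finset.mem_range.mpr hj2)
    intro p hp
    obtain hmem := hcover hp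
    simp only [Set.mem_iUnion, exists_prop, Finset.mem_range, Finset.mem_erase] at hmem ⊢
    obtain ⟨k, hk, hpk⟩ := hmem
    by_cases hkj : k = j + 1
    · subst hkj
      by_cases hpb : p ≤ b j
      · exact ⟨j, ⟨by omega, hj1⟩, le_trans hmono12 hpk.1, hpb⟩
      · push_neg at hpb
        exact ⟨j+2, ⟨by omega, hj⟩, le_trans hab2 hpb.le, le_trans hpk.2 hc.le⟩
    · exact ⟨k, ⟨hkj, hk⟩, hpk⟩
end

section
/- Let x < y be real numbers with δ = y − x, and let I₁, …, I_m be closed bounded intervals, each of length at most δ, whose union contains [x, y], and which form a minimal cover in the sense that for every j₀ ∈ {1,…,m} the union of the intervals I_j with j ≠ j₀ does not contain [x, y]. Then the total length satisfies Σ_{j=1}^m |I_j| ≤ 4δ. -/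
open MeasureTheory ENNReal

theorem minimal_cover_total_length_le (x y : ℝ) (hxy : x < y) (δ : ℝ) (hδ : δ = y - x)
    (m : ℕ) (a b : ℕ → ℝ)
    (hab : ∀ j < m, a j ≤ b j)
    (hlen : ∀ j < m, b j - a j ≤ δ)
    (hcover : Set.Icc x y ⊆ ⋃ j ∈ Finset.range m, Set.Icc (a j) (b j))
    (hmin : ∀ j₀ ∈ Finset.range m,
      ¬ (Set.Icc x y ⊆ ⋃ j ∈ (Finset.range m).erase j₀, Set.Icc (a j) (b j))) :
    ∑ j ∈ Finset.range m, (b j - a j) ≤ 4 * δ := by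
  classical
  have hδ0 : 0 ≤ δ := by rw [hδ]; linarith
  -- witnesses: each interval has a point of [x,y] it covers alone
  have hwex : ∀ j ∈ Finset.range m, ∃ t, t ∈ Set.Icc x y ∧ t ∈ Set.Icc (a j) (b j) ∧
      ∀ k ∈ Finset.range m, k ≠ j → t ∉ Set.Icc (a k) (b k) := by
    intro j hj
    have h := hmin j hj
    rw [Set.not_subset] at h
    obtain ⟨t, ht, hnt⟩ := h
    have hnot : ∀ k ∈ Finset.range m, k ≠ j → t ∉ Set.Icc (a k) (b k) := by
      intro k hk hkj hmem
      apply hnt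
      simp only [Set.mem_iUnion]
      exact ⟨k, Finset.mem_erase.mpr ⟨hkj, hk⟩, hmem⟩
    refine ⟨t, ht, ?_, hnot⟩
    have := hcover ht
    simp only [Set.mem_iUnion] at this
    obtain ⟨k, hk, htk⟩ := this
    by_cases hkj : k = j
    · subst hkj; exact htk
    · exact absurd htk (hnot k hk hkj)
  choose! w hw1 hw2 hw3 using hwex
  -- two intervals both containing a point with witnesses on the left of it: impossible
  have sideL : ∀ t : ℝ, ∀ p ∈ Finset.range m, ∀ q ∈ Finset.range m, p ≠ q →
      t ∈ Set.Icc (a p) (b p) → t ∈ Set.Icc (a q) (b q) →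
      w p ≤ t → w q ≤ t → False := by
    intro t p hp q hq hpq htp htq h1 h2
    obtain ⟨hap, hbp⟩ := hw2 p hp
    obtain ⟨haq, hbq⟩ := hw2 q hq
    obtain ⟨htp1, htp2⟩ := htp
    obtain ⟨htq1, htq2⟩ := htq
    rcases le_total (w p) (w q) with h | h
    · exact hw3 q hq p hp hpq ⟨by linarith, by linarith⟩
    · exact hw3 p hp q hq (Ne.symm hpq) ⟨by linarith, by linarith⟩
  have sideR : ∀ t : ℝ, ∀ p ∈ Finset.range m, ∀ q ∈ Finset.range m, p ≠ q →
      t ∈ Set.Icc (a p) (b p) → t ∈ Set.Icc (a q) (b q) →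
      t ≤ w p → t ≤ w q → False := by
    intro t p hp q hq hpq htp htq h1 h2
    obtain ⟨hap, hbp⟩ := hw2 p hp
    obtain ⟨haq, hbq⟩ := hw2 q hq
    obtain ⟨htp1, htp2⟩ := htp
    obtain ⟨htq1, htq2⟩ := htq
    rcases le_total (w p) (w q) with h | h
    · exact hw3 p hp q hq (Ne.symm hpq) ⟨by linarith, by linarith⟩
    · exact hw3 q hq p hp hpq ⟨by linarith, by linarith⟩
  -- multiplicity at most 2
  have mult : ∀ t : ℝ,
      ((Finset.range m).filter (fun j => t ∈ Set.Icc (a j) (b j))).card ≤ 2 := by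
    intro t
    by_contra h
    push_neg at h
    rw [Finset.two_lt_card] at h
    obtain ⟨p, hp, q, hq, r, hr, hpq, hpr, hqr⟩ := h
    simp only [Finset.mem_filter] at hp hq hr
    obtain ⟨hp1, hp2⟩ := hp
    obtain ⟨hq1, hq2⟩ := hq
    obtain ⟨hr1, hr2⟩ := hr
    rcases le_total (w p) t with h1 | h1 <;> rcases le_total (w q) t with h2 | h2 <;>
      rcases le_total (w r) t with h3 | h3
    · exact sideL t p hp1 q hq1 hpq hp2 hq2 h1 h2
    · exact sideL t p hp1 q hq1 hpq hp2 hq2 h1 h2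
    · exact sideL t p hp1 r hr1 hpr hp2 hr2 h1 h3
    · exact sideR t q hq1 r hr1 hqr hq2 hr2 h2 h3
    · exact sideL t q hq1 r hr1 hqr hq2 hr2 h2 h3
    · exact sideR t p hp1 r hr1 hpr hp2 hr2 h1 h3
    · exact sideR t p hp1 q hq1 hpq hp2 hq2 h1 h2
    · exact sideR t p hp1 q hq1 hpq hp2 hq2 h1 h2
  -- measure-theoretic multiplicity bound
  have key : ∑ j ∈ Finset.range m, volume (Set.Icc (a j) (b j) ∩ Set.Icc x y)
      ≤ 2 * volume (Set.Icc x y) := by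
    have meas : ∀ j : ℕ, MeasurableSet (Set.Icc (a j) (b j) ∩ Set.Icc x y) :=
      fun j => measurableSet_Icc.inter measurableSet_Icc
    have pointwise : ∀ t : ℝ,
        ∑ j ∈ Finset.range m, (Set.Icc (a j) (b j) ∩ Set.Icc x y).indicator
          (1 : ℝ → ℝ≥0∞) t
        ≤ (Set.Icc x y).indicator (fun _ => (2 : ℝ≥0∞)) t := by
      intro t
      by_cases ht : t ∈ Set.Icc x y
      · rw [Set.indicator_of_mem ht]
        have : ∑ j ∈ Finset.range m, (Set.Icc (a j) (b j) ∩ Set.Icc x y).indicator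
            (1 : ℝ → ℝ≥0∞) t
            = (((Finset.range m).filter (fun j => t ∈ Set.Icc (a j) (b j))).card : ℝ≥0∞) := by
          rw [Finset.card_filter]
          push_cast
          apply Finset.sum_congr rfl
          intro j hj
          by_cases hmem : t ∈ Set.Icc (a j) (b j)
          · rw [Set.indicator_of_mem (Set.mem_inter hmem ht), if_pos hmem]; rfl
          · rw [Set.indicator_of_notMem (fun hc => hmem hc.1), if_neg hmem]
        rw [this]
        have := mult t
        exact_mod_cast Nat.cast_le.mpr this
      · rw [Set.indicator_of_notMem ht]
        have : ∀ j ∈ Finset.range m, (Set.Icc (a j) (b j) ∩ Set.Icc x y).indicator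
            (1 : ℝ → ℝ≥0∞) t = 0 := by
          intro j _
          exact Set.indicator_of_notMem (fun hc => ht hc.2) _
        rw [Finset.sum_congr rfl this]
        simp
    calc ∑ j ∈ Finset.range m, volume (Set.Icc (a j) (b j) ∩ Set.Icc x y)
        = ∑ j ∈ Finset.range m, ∫⁻ t, (Set.Icc (a j) (b j) ∩ Set.Icc x y).indicator
            (1 : ℝ → ℝ≥0∞) t := by
          refine Finset.sum_congr rfl fun j _ => ?_
          rw [lintegral_indicator_one (meas j)]
      _ = ∫⁻ t, ∑ j ∈ Finset.range m, (Set.Icc (a j) (b j) ∩ Set.Icc x y).indicator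
            (1 : ℝ → ℝ≥0∞) t :=
          (lintegral_finset_sum _ fun j _ => measurable_one.indicator (meas j)).symm
      _ ≤ ∫⁻ t, (Set.Icc x y).indicator (fun _ => (2 : ℝ≥0∞)) t :=
          lintegral_mono pointwise
      _ = 2 * volume (Set.Icc x y) := lintegral_indicator_const measurableSet_Icc 2
  -- convert key to a real inequality
  have hxw : ∀ j ∈ Finset.range m, x ≤ b j := by
    intro j hj
    have h1 := (hw1 j hj).1
    have h2 := (hw2 j hj).2
    linarith
  have hya : ∀ j ∈ Finset.range m, a j ≤ y := by
    intro j hj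
    have h1 := (hw1 j hj).2
    have h2 := (hw2 j hj).1
    linarith
  have hLR : ∀ j ∈ Finset.range m, max (a j) x ≤ min (b j) y := by
    intro j hj
    obtain ⟨h1, h2⟩ := hw1 j hj
    obtain ⟨h3, h4⟩ := hw2 j hj
    exact le_trans (max_le h3 h1) (le_min h4 h2)
  have key2 : ∑ j ∈ Finset.range m, (min (b j) y - max (a j) x) ≤ 2 * δ := by
    have hvol : ∀ j ∈ Finset.range m, volume (Set.Icc (a j) (b j) ∩ Set.Icc x y)
        = ENNReal.ofReal (min (b j) y - max (a j) x) := by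
      intro j _
      rw [Set.Icc_inter_Icc, Real.volume_Icc]
    rw [Finset.sum_congr rfl hvol, Real.volume_Icc, ← hδ] at key
    rw [← ENNReal.ofReal_sum_of_nonneg (fun j hj => by linarith [hLR j hj])] at key
    have h2 : (2 : ℝ≥0∞) * ENNReal.ofReal δ = ENNReal.ofReal (2 * δ) := by
      rw [ENNReal.ofReal_mul (by norm_num : (0:ℝ) ≤ 2), ENNReal.ofReal_ofNat]
    rw [h2] at key
    exact (ENNReal.ofReal_le_ofReal_iff (by linarith)).mp key
  -- overhang bounds
  have left_over : ∑ j ∈ Finset.range m, max (x - a j) 0 ≤ δ := by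
    by_cases hex : ∃ j ∈ Finset.range m, a j < x
    · obtain ⟨j₀, hj₀, hj₀x⟩ := hex
      rw [Finset.sum_eq_single_of_mem j₀ hj₀]
      · have hb := hxw j₀ hj₀
        have hl := hlen j₀ (Finset.mem_range.mp hj₀)
        exact max_le (by linarith) hδ0
      · intro k hk hkj
        have : ¬ a k < x := by
          intro hkx
          have hxp : x ∈ Set.Icc (a k) (b k) := ⟨le_of_lt hkx, hxw k hk⟩
          have hxq : x ∈ Set.Icc (a j₀) (b j₀) := ⟨le_of_lt hj₀x, hxw j₀ hj₀⟩
          exact sideR x k hk j₀ hj₀ hkj hxp hxq ((hw1 k hk).1) ((hw1 j₀ hj₀).1)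
        exact max_eq_right (by linarith)
    · push_neg at hex
      have : ∀ j ∈ Finset.range m, max (x - a j) 0 = 0 := by
        intro j hj
        exact max_eq_right (by linarith [hex j hj])
      rw [Finset.sum_congr rfl this]
      simpa using hδ0
  have right_over : ∑ j ∈ Finset.range m, max (b j - y) 0 ≤ δ := by
    by_cases hex : ∃ j ∈ Finset.range m, y < b j
    · obtain ⟨j₀, hj₀, hj₀y⟩ := hex
      rw [Finset.sum_eq_single_of_mem j₀ hj₀]
      · have ha := hya j₀ hj₀
        have hl := hlen j₀ (Finset.mem_range.mp hj₀)
        exact max_le (by linarith) hδ0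
      · intro k hk hkj
        have : ¬ y < b k := by
          intro hky
          have hyp : y ∈ Set.Icc (a k) (b k) := ⟨hya k hk, le_of_lt hky⟩
          have hyq : y ∈ Set.Icc (a j₀) (b j₀) := ⟨hya j₀ hj₀, le_of_lt hj₀y⟩
          exact sideL y k hk j₀ hj₀ hkj hyp hyq ((hw1 k hk).2) ((hw1 j₀ hj₀).2)
        exact max_eq_right (by linarith)
    · push_neg at hex
      have : ∀ j ∈ Finset.range m, max (b j - y) 0 = 0 := by
        intro j hj
        exact max_eq_right (by linarith [hex j hj])
      rw [Finset.sum_congr rfl this]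
      simpa using hδ0
  -- decomposition identity and final assembly
  have decomp : ∀ j ∈ Finset.range m, b j - a j
      = (min (b j) y - max (a j) x) + max (x - a j) 0 + max (b j - y) 0 := by
    intro j hj
    rcases le_total (a j) x with h1 | h1 <;> rcases le_total (b j) y with h2 | h2 <;>
      simp [max_def, min_def, h1, h2] <;> split_ifs <;> linarith
  calc ∑ j ∈ Finset.range m, (b j - a j)
      = ∑ j ∈ Finset.range m, ((min (b j) y - max (a j) x) + max (x - a j) 0
          + max (b j - y) 0) := Finset.sum_congr rfl decomp
    _ = (∑ j ∈ Finset.range m, (min (b j) y - max (a j) x))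
          + (∑ j ∈ Finset.range m, max (x - a j) 0)
          + (∑ j ∈ Finset.range m, max (b j - y) 0) := by
        rw [Finset.sum_add_distrib, Finset.sum_add_distrib]
    _ ≤ 2 * δ + δ + δ := add_le_add (add_le_add key2 left_over) right_over
    _ = 4 * δ := by ring
end

section
/- Let f : [0,1] → ℝ be L-Lipschitz for some L ≥ 0, let λ ∈ ℝ, and let c ∈ (0, 1/2). Suppose that for every closed interval [a,b] ⊆ [0,1] with a < b there exist s, t with a ≤ s < t ≤ b such that s ≤ (a+b)/2 ≤ t, c·(b−a) ≤ t − s ≤ (b−a)/2, and f(t) − f(s) = λ·(t − s). Then f(b) − f(a) = λ·(b − a) for all a, b ∈ [0,1]; in particular f(x) = f(0) + λx for all x ∈ [0,1]. -/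
theorem lipschitz_with_dense_mean_slope_is_affine (f : ℝ → ℝ)
    (L : ℝ) (hL : 0 ≤ L)
    (hlip : ∀ x ∈ Set.Icc (0 : ℝ) 1, ∀ y ∈ Set.Icc (0 : ℝ) 1,
      |f x - f y| ≤ L * |x - y|)
    (lam : ℝ) (c : ℝ) (hc : c ∈ Set.Ioo (0 : ℝ) (1 / 2))
    (hsub : ∀ a b : ℝ, 0 ≤ a → a < b → b ≤ 1 →
      ∃ s t : ℝ, a ≤ s ∧ s < t ∧ t ≤ b ∧
        s ≤ (a + b) / 2 ∧ (a + b) / 2 ≤ t ∧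
        c * (b - a) ≤ t - s ∧ t - s ≤ (b - a) / 2 ∧
        f t - f s = lam * (t - s)) :
    (∀ a ∈ Set.Icc (0 : ℝ) 1, ∀ b ∈ Set.Icc (0 : ℝ) 1,
      f b - f a = lam * (b - a)) ∧
    (∀ x ∈ Set.Icc (0 : ℝ) 1, f x = f 0 + lam * x) := by
  obtain ⟨hc0, hc2⟩ := hc
  set g : ℝ → ℝ := fun x => f x - lam * x with hg
  have hq0 : (0 : ℝ) < 1 - c := by linarith
  have hq1 : 1 - c < 1 := by linarith
  -- Main iterated Lipschitz bound
  have key : ∀ n : ℕ, ∀ x ∈ Set.Icc (0:ℝ) 1, ∀ y ∈ Set.Icc (0:ℝ) 1, x ≤ y →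
      |g y - g x| ≤ (L + |lam|) * (1 - c) ^ n * (y - x) := by
    intro n
    induction n with
    | zero =>
      intro x hx y hy hxy
      have h1 := hlip y hy x hx
      have h2 : |g y - g x| ≤ |f y - f x| + |lam| * |y - x| := by
        have : g y - g x = (f y - f x) - lam * (y - x) := by simp [hg]; ring
        rw [this]
        calc |(f y - f x) - lam * (y - x)| ≤ |f y - f x| + |lam * (y - x)| :=
              abs_sub _ _
          _ = |f y - f x| + |lam| * |y - x| := by rw [abs_mul]
      have h3 : |y - x| = y - x := abs_of_nonneg (by linarith)
      rw [h3] at h1 h2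
      calc |g y - g x| ≤ L * (y - x) + |lam| * (y - x) := by linarith
        _ = (L + |lam|) * (1 - c) ^ 0 * (y - x) := by ring
    | succ n ih =>
      intro x hx y hy hxy
      rcases eq_or_lt_of_le hxy with rfl | hlt
      · simp
      obtain ⟨s, t, hxs, hst, hty, _, _, hcst, _, heq⟩ := hsub x y hx.1 hlt hy.2
      have hs : s ∈ Set.Icc (0:ℝ) 1 := ⟨le_trans hx.1 hxs, le_trans (le_trans hst.le hty) hy.2⟩
      have ht : t ∈ Set.Icc (0:ℝ) 1 := ⟨le_trans hs.1 hst.le, le_trans hty hy.2⟩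
      have hgst : g t = g s := by
        have : f t - f s - lam * (t - s) = 0 := by rw [heq]; ring
        simp only [hg]; linarith [this]
      have h1 := ih x hx s hs hxs
      have h2 := ih t ht y hy hty
      have K0 : 0 ≤ (L + |lam|) * (1 - c) ^ n := by positivity
      have hdecomp : g y - g x = (g y - g t) + (g s - g x) := by rw [hgst]; ring
      have : |g y - g x| ≤ (L + |lam|) * (1 - c) ^ n * ((y - t) + (s - x)) := by
        rw [hdecomp]
        calc |(g y - g t) + (g s - g x)| ≤ |g y - g t| + |g s - g x| := abs_add_le _ _
          _ ≤ (L + |lam|) * (1 - c) ^ n * (y - t) + (L + |lam|) * (1 - c) ^ n * (s - x) := by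
              linarith
          _ = (L + |lam|) * (1 - c) ^ n * ((y - t) + (s - x)) := by ring
      have hsum : (y - t) + (s - x) ≤ (1 - c) * (y - x) := by linarith
      calc |g y - g x| ≤ (L + |lam|) * (1 - c) ^ n * ((y - t) + (s - x)) := this
        _ ≤ (L + |lam|) * (1 - c) ^ n * ((1 - c) * (y - x)) := by
            exact mul_le_mul_of_nonneg_left hsum K0
        _ = (L + |lam|) * (1 - c) ^ (n + 1) * (y - x) := by ring
  -- conclude g is constant on [0,1]
  have hconst : ∀ x ∈ Set.Icc (0:ℝ) 1, ∀ y ∈ Set.Icc (0:ℝ) 1, x ≤ y → g y = g x := by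
    intro x hx y hy hxy
    have habs : |g y - g x| ≤ 0 := by
      have htend : Filter.Tendsto (fun n : ℕ => (L + |lam|) * (1 - c) ^ n * (y - x))
          Filter.atTop (nhds 0) := by
        have := tendsto_pow_atTop_nhds_zero_of_lt_one hq0.le hq1
        have h := (this.const_mul (L + |lam|)).mul_const (y - x)
        simpa using h
      exact ge_of_tendsto' htend fun n => key n x hx y hy hxy
    have := abs_nonneg (g y - g x)
    have : |g y - g x| = 0 := le_antisymm habs this
    have := abs_eq_zero.mp this
    linarith
  have main : ∀ a ∈ Set.Icc (0:ℝ) 1, ∀ b ∈ Set.Icc (0:ℝ) 1,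
      f b - f a = lam * (b - a) := by
    intro a ha b hb
    rcases le_total a b with h | h
    · have := hconst a ha b hb h
      simp only [hg] at this
      linarith
    · have := hconst b hb a ha h
      simp only [hg] at this
      linarith
  refine ⟨main, fun x hx => ?_⟩
  have := main 0 ⟨le_refl 0, zero_le_one⟩ x hx
  linarith
end
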